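/- arXiv:0802.2424 — 5 statements merged into one kernel-verified Lean document; each statement's English description precedes it below -/
import Mathlib

section
/- Let d ≥ 2 and let μ be a Borel probability measure on ℝ^d with joint distribution function H(x_1,…,x_d) = μ{y ∈ ℝ^d : y_1 ≤ x_1, …, y_d ≤ x_d}, and suppose that each marginal distribution function F_m(t) = μ{y : y_m ≤ t}, m = 1,…,d, is continuous. Then there exists a unique function C : [0,1]^d → [0,1] which is the joint distribution function of a Borel probability measure on [0,1]^d all of whose one-dimensional marginals are the uniform distribution on [0,1], and which satisfies H(x_1,…,x_d) = C(F_1(x_1),…,F_d(x_d)) for all (x_1,…,x_d) ∈ ℝ^d. -/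
open MeasureTheory Set

noncomputable section

namespace Sklar

/-- The unit cube `[0,1]^d`. -/
def box (d : ℕ) : Set (Fin d → ℝ) := Set.univ.pi fun _ => Set.Icc (0 : ℝ) 1

/-- The lower orthant `{y : y_1 ≤ x_1, …, y_d ≤ x_d}`. -/
def orthant {d : ℕ} (x : Fin d → ℝ) : Set (Fin d → ℝ) := {y | ∀ m, y m ≤ x m}

/-- `C` is a copula: on `[0,1]^d` it coincides with the joint distribution function of a
Borel probability measure concentrated on `[0,1]^d` whose one-dimensional marginals are all
the uniform distribution on `[0,1]`. -/
def IsCopula (d : ℕ) (C : (Fin d → ℝ) → ℝ) : Prop :=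
  ∃ ν : Measure (Fin d → ℝ), IsProbabilityMeasure ν ∧ ν (box d)ᶜ = 0 ∧
    (∀ m : Fin d, ν.map (fun y => y m) = volume.restrict (Set.Icc (0 : ℝ) 1)) ∧
    ∀ u ∈ box d, C u = (ν (orthant u)).toReal

end Sklar


/-!
Push `μ` forward along `T y = (F_1(y_1), …, F_d(y_d))`. Since each `F_m` is continuous, it
carries the `m`-th marginal to the uniform distribution on `[0,1]` (probability integral
transform), so `ν = T_* μ` is a copula measure; and `{F_m ≤ F_m(s)}` differs from `(-∞, s]` by a
null set of the marginal, so `H(x) = ν(orthant (T x))`. For uniqueness: the `F_m` take every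
value in `(0,1)`, so two copulas representing `H` agree on `(0,1)^d`; a copula is Lipschitz
because its marginals are uniform, so they agree on the closure `[0,1]^d`.
-/

open ProbabilityTheory Filter Topology

namespace Sklar

section cdf

variable {ρ : Measure ℝ}

lemma Ioo_subset_range_cdf (hc : Continuous (cdf ρ)) : Ioo 0 1 ⊆ range (cdf ρ) := fun _ ha =>
  mem_range_of_exists_le_of_exists_ge hc
    ((tendsto_cdf_atBot ρ).eventually (eventually_le_nhds ha.1)).exists
    ((tendsto_cdf_atTop ρ).eventually (eventually_ge_nhds ha.2)).exists

variable [IsProbabilityMeasure ρ]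

lemma measure_cdf_le_cdf (hc : Continuous (cdf ρ)) (s : ℝ) :
    ρ {t | cdf ρ t ≤ cdf ρ s} = ρ (Iic s) := by
  set S := {t | cdf ρ t ≤ cdf ρ s}
  have hsS : s ∈ S := le_refl (cdf ρ s)
  by_cases hS : BddAbove S
  · have hb : sSup S ∈ S := (isClosed_le hc continuous_const).csSup_mem ⟨s, hsS⟩ hS
    have hSb : S = Iic (sSup S) :=
      Subset.antisymm (fun t ht => le_csSup hS ht) fun t ht => ((cdf ρ).mono ht).trans hb
    have hcdf : cdf ρ (sSup S) = cdf ρ s := le_antisymm hb ((cdf ρ).mono (le_csSup hS hsS))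
    rw [hSb, ← ofReal_cdf, ← ofReal_cdf, hcdf]
  · have hSuniv : ∀ t, cdf ρ t ≤ cdf ρ s := fun t =>
      let ⟨_, ht', htt'⟩ := not_bddAbove_iff.1 hS t
      ((cdf ρ).mono htt'.le).trans ht'
    have hs1 : cdf ρ s = 1 :=
      le_antisymm (cdf_le_one ρ s) (le_of_tendsto' (tendsto_cdf_atTop ρ) hSuniv)
    rw [show S = univ from eq_univ_of_forall hSuniv, measure_univ, ← ofReal_cdf, hs1, ENNReal.ofReal_one]

lemma cdf_le_cdf_ae_eq (hc : Continuous (cdf ρ)) (s : ℝ) :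
    {t | cdf ρ t ≤ cdf ρ s} =ᵐ[ρ] Iic s :=
  (ae_eq_of_subset_of_measure_ge (s := Iic s) (t := {t | cdf ρ t ≤ cdf ρ s})
    (fun _ ht => (cdf ρ).mono ht) (measure_cdf_le_cdf hc s).le
    measurableSet_Iic.nullMeasurableSet (measure_ne_top _ _)).symm

lemma map_cdf_eq_volume_restrict (hc : Continuous (cdf ρ)) :
    ρ.map (cdf ρ) = volume.restrict (Icc 0 1) := by
  have : IsProbabilityMeasure (ρ.map (cdf ρ)) := Measure.isProbabilityMeasure_map hc.aemeasurable
  refine Measure.ext_of_Iic _ _ fun a => ?_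
  rw [Measure.map_apply hc.measurable measurableSet_Iic, Measure.restrict_apply measurableSet_Iic]
  by_cases ha : a ∈ range (cdf ρ)
  · obtain ⟨s, rfl⟩ := ha
    have : Iic (cdf ρ s) ∩ Icc 0 1 = Icc 0 (cdf ρ s) := by
      ext t
      simp only [mem_inter_iff, mem_Iic, mem_Icc]
      exact ⟨fun h => ⟨h.2.1, h.1⟩, fun h => ⟨h.2, h.1, h.2.trans (cdf_le_one ρ s)⟩⟩
    rw [this, Real.volume_Icc, sub_zero, ofReal_cdf]
    exact measure_cdf_le_cdf hc s
  by_cases hlow : ∃ t, cdf ρ t ≤ a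
  · have hbelow : ∀ t, cdf ρ t < a := fun t =>
      not_le.1 fun h => ha (mem_range_of_exists_le_of_exists_ge hc hlow ⟨t, h⟩)
    have h1a : 1 ≤ a := le_of_tendsto' (tendsto_cdf_atTop ρ) fun t => (hbelow t).le
    rw [show cdf ρ ⁻¹' Iic a = univ from eq_univ_of_forall fun t => (hbelow t).le, measure_univ,
      inter_eq_right.2 fun t ht => ht.2.trans h1a, Real.volume_Icc, sub_zero, ENNReal.ofReal_one]
  · push Not at hlow
    have ha0 : a ≤ 0 := ge_of_tendsto' (tendsto_cdf_atBot ρ) fun t => (hlow t).le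
    rw [show cdf ρ ⁻¹' Iic a = ∅ from eq_empty_of_forall_notMem fun t ht => (hlow t).not_ge ht,
      measure_empty]
    exact (measure_mono_null (fun t ht => le_antisymm (ht.1.trans ha0) ht.2.1)
      (measure_singleton 0)).symm

end cdf

def HasUniformMarginals {d : ℕ} (κ : Measure (Fin d → ℝ)) : Prop :=
  ∀ m : Fin d, κ.map (fun y => y m) = volume.restrict (Icc (0 : ℝ) 1)

section orthant

variable {d : ℕ}

lemma measurableSet_orthant (u : Fin d → ℝ) : MeasurableSet (orthant u) := by
  simp only [orthant, ofPred_forall]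
  exact .iInter fun m => measurableSet_le (measurable_pi_apply m) measurable_const

lemma measurableSet_box (d : ℕ) : MeasurableSet (box d) :=
  MeasurableSet.univ_pi fun _ => measurableSet_Icc

variable {κ : Measure (Fin d → ℝ)}

lemma HasUniformMarginals.measure_preimage_eval (hκ : HasUniformMarginals κ) (m : Fin d)
    {s : Set ℝ} (hs : MeasurableSet s) : κ ((fun y => y m) ⁻¹' s) = volume (s ∩ Icc 0 1) := by
  rw [← Measure.map_apply (measurable_pi_apply m) hs, hκ m, Measure.restrict_apply hs]

lemma HasUniformMarginals.measure_orthant_le_add (hκ : HasUniformMarginals κ)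
    (u v : Fin d → ℝ) :
    κ (orthant u) ≤ κ (orthant v) + ∑ m, ENNReal.ofReal (u m - v m) := by
  have hcover : orthant u ⊆ orthant v ∪ ⋃ m, (fun y => y m) ⁻¹' Ioc (v m) (u m) := by
    intro y hy
    by_cases hv : y ∈ orthant v
    · exact Or.inl hv
    · obtain ⟨m, hm⟩ : ∃ m, v m < y m := by simpa [orthant] using hv
      exact Or.inr (mem_iUnion.2 ⟨m, hm, hy m⟩)
  calc κ (orthant u)
      ≤ κ (orthant v) + ∑ m, κ ((fun y => y m) ⁻¹' Ioc (v m) (u m)) :=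
        (measure_mono hcover).trans <|
          (measure_union_le _ _).trans (add_le_add le_rfl (measure_iUnion_fintype_le _ _))
    _ ≤ κ (orthant v) + ∑ m, ENNReal.ofReal (u m - v m) := by
        gcongr with m
        rw [hκ.measure_preimage_eval m measurableSet_Ioc, ← Real.volume_Ioc]
        exact measure_mono inter_subset_left

lemma HasUniformMarginals.lipschitzWith_measure_orthant [IsFiniteMeasure κ]
    (hκ : HasUniformMarginals κ) : LipschitzWith d fun u => (κ (orthant u)).toReal := by
  refine LipschitzWith.of_le_add_mul _ fun u v => ?_
  have hsum : ∑ m, ENNReal.ofReal (u m - v m) ≠ ⊤ :=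
    ENNReal.sum_ne_top.2 fun _ _ => ENNReal.ofReal_ne_top
  have h := ENNReal.toReal_mono (ENNReal.add_ne_top.2 ⟨measure_ne_top _ _, hsum⟩)
    (hκ.measure_orthant_le_add u v)
  rw [ENNReal.toReal_add (measure_ne_top _ _) hsum,
    ENNReal.toReal_sum fun _ _ => ENNReal.ofReal_ne_top] at h
  calc (κ (orthant u)).toReal
      ≤ (κ (orthant v)).toReal + ∑ m, (ENNReal.ofReal (u m - v m)).toReal := h
    _ ≤ (κ (orthant v)).toReal + ∑ _ : Fin d, dist u v := by
        gcongr with m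
        rw [ENNReal.toReal_ofReal']
        exact (max_le (le_abs_self _) (abs_nonneg _)).trans (dist_le_pi_dist u v m)
    _ = (κ (orthant v)).toReal + d * dist u v := by simp

lemma HasUniformMarginals.eqOn_box_of_eqOn_pi_Ioo {κ' : Measure (Fin d → ℝ)}
    [IsFiniteMeasure κ] [IsFiniteMeasure κ'] (hκ : HasUniformMarginals κ)
    (hκ' : HasUniformMarginals κ')
    (h : EqOn (fun u => (κ (orthant u)).toReal) (fun u => (κ' (orthant u)).toReal)
      (univ.pi fun _ => Ioo 0 1)) :
    EqOn (fun u => (κ (orthant u)).toReal) (fun u => (κ' (orthant u)).toReal) (box d) :=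
  h.of_subset_closure hκ.lipschitzWith_measure_orthant.continuous.continuousOn
    hκ'.lipschitzWith_measure_orthant.continuous.continuousOn
    (pi_mono fun _ _ => Ioo_subset_Icc_self)
    (by rw [closure_pi_set, closure_Ioo zero_ne_one]; rfl)

end orthant

section marginalCdfMap

variable {d : ℕ} (μ : Measure (Fin d → ℝ))

def marginalCdfMap (y : Fin d → ℝ) : Fin d → ℝ := fun m => cdf (μ.map fun y => y m) (y m)

instance isProbabilityMeasure_map_eval [IsProbabilityMeasure μ] (m : Fin d) :
    IsProbabilityMeasure (μ.map fun y => y m) :=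
  Measure.isProbabilityMeasure_map (measurable_pi_apply m).aemeasurable

lemma marginalCdfMap_mem_box (y : Fin d → ℝ) : marginalCdfMap μ y ∈ box d :=
  fun _ _ => ⟨cdf_nonneg _ _, cdf_le_one _ _⟩

variable {μ}

lemma continuous_marginalCdfMap (hc : ∀ m, Continuous (cdf (μ.map fun y => y m))) :
    Continuous (marginalCdfMap μ) :=
  continuous_pi fun m => (hc m).comp (continuous_apply m)

lemma map_marginalCdfMap_compl_box (hc : ∀ m, Continuous (cdf (μ.map fun y => y m))) :
    μ.map (marginalCdfMap μ) (box d)ᶜ = 0 := by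
  rw [Measure.map_apply (continuous_marginalCdfMap hc).measurable (measurableSet_box d).compl]
  exact measure_mono_null (fun y hy => hy (marginalCdfMap_mem_box μ y)) measure_empty

lemma hasUniformMarginals_map_marginalCdfMap [IsProbabilityMeasure μ]
    (hc : ∀ m, Continuous (cdf (μ.map fun y => y m))) :
    HasUniformMarginals (μ.map (marginalCdfMap μ)) := fun m => by
  rw [Measure.map_map (measurable_pi_apply m) (continuous_marginalCdfMap hc).measurable,
    show (fun y => y m) ∘ marginalCdfMap μ = cdf (μ.map fun y => y m) ∘ fun y => y m from rfl,
    ← Measure.map_map (hc m).measurable (measurable_pi_apply m)]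
  exact map_cdf_eq_volume_restrict (hc m)

lemma measure_map_marginalCdfMap_orthant [IsProbabilityMeasure μ]
    (hc : ∀ m, Continuous (cdf (μ.map fun y => y m))) (x : Fin d → ℝ) :
    μ.map (marginalCdfMap μ) (orthant (marginalCdfMap μ x)) = μ (orthant x) := by
  rw [Measure.map_apply (continuous_marginalCdfMap hc).measurable (measurableSet_orthant _)]
  have hpre : marginalCdfMap μ ⁻¹' orthant (marginalCdfMap μ x) =
      ⋂ m, (fun y => y m) ⁻¹' {t | cdf (μ.map fun y => y m) t ≤ marginalCdfMap μ x m} := by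
    ext y; simp [orthant, marginalCdfMap]
  have horth : orthant x = ⋂ m, (fun y => y m) ⁻¹' Iic (x m) := by
    ext y; simp [orthant]
  rw [hpre, horth]
  exact measure_congr <| EventuallyEq.iInter fun m =>
    (cdf_le_cdf_ae_eq (hc m) (x m)).comp_tendsto
      (Measure.tendsto_ae_map (measurable_pi_apply m).aemeasurable)

lemma pi_Ioo_subset_range_marginalCdfMap (hc : ∀ m, Continuous (cdf (μ.map fun y => y m))) :
    univ.pi (fun _ => Ioo 0 1) ⊆ range (marginalCdfMap μ) := fun v hv => by
  choose x hx using fun m => Ioo_subset_range_cdf (hc m) (hv m (mem_univ m))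
  exact ⟨x, funext hx⟩

end marginalCdfMap

end Sklar

open Sklar in
theorem sklar_theorem_general
    (d : ℕ) (μ : Measure (Fin d → ℝ)) [IsProbabilityMeasure μ]
    (F : Fin d → ℝ → ℝ)
    (hF : ∀ (m : Fin d) (t : ℝ), F m t = (μ {y | y m ≤ t}).toReal)
    (hFc : ∀ m, Continuous (F m)) :
    ∃ C : (Fin d → ℝ) → ℝ,
      (IsCopula d C ∧
        ∀ x : Fin d → ℝ, (μ (orthant x)).toReal = C fun m => F m (x m)) ∧
      ∀ C' : (Fin d → ℝ) → ℝ,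
        (IsCopula d C' ∧
          ∀ x : Fin d → ℝ, (μ (orthant x)).toReal = C' fun m => F m (x m)) →
        Set.EqOn C' C (box d) := by
  obtain rfl : F = fun m => ⇑(cdf (μ.map fun y => y m)) := funext₂ fun m t => by
    rw [hF, cdf_eq_real, measureReal_def, Measure.map_apply (measurable_pi_apply m)
      measurableSet_Iic]
    rfl
  set ν := μ.map (marginalCdfMap μ)
  have hν : HasUniformMarginals ν := hasUniformMarginals_map_marginalCdfMap hFc
  have hH : ∀ x, (μ (orthant x)).toReal = (ν (orthant (marginalCdfMap μ x))).toReal := fun x => by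
    rw [measure_map_marginalCdfMap_orthant hFc]
  have hνprob : IsProbabilityMeasure ν :=
    Measure.isProbabilityMeasure_map (continuous_marginalCdfMap hFc).aemeasurable
  refine ⟨fun u => (ν (orthant u)).toReal,
    ⟨⟨ν, hνprob, map_marginalCdfMap_compl_box hFc, hν, fun _ _ => rfl⟩, hH⟩, ?_⟩
  rintro C' ⟨⟨ν', hν'prob, -, hν', hC'⟩, hH'⟩ u hu
  rw [hC' u hu]
  refine HasUniformMarginals.eqOn_box_of_eqOn_pi_Ioo hν' hν ?_ hu
  rintro _ hv
  obtain ⟨x, rfl⟩ := pi_Ioo_subset_range_marginalCdfMap hFc hv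
  exact ((hC' _ (marginalCdfMap_mem_box μ x)).symm.trans (hH' x).symm).trans (hH x)

open Sklar in
/-- Sklar's theorem: if `μ` is a Borel probability measure on `ℝ^d`
(`d ≥ 2`) whose marginal distribution functions `F_1, …, F_d` are continuous, then there is
a unique copula `C` with `H(x) = C(F_1(x_1), …, F_d(x_d))` for all `x`, where `H` is the
joint distribution function of `μ`. -/
theorem sklar_theorem
    (d : ℕ) (hd : 2 ≤ d) (μ : Measure (Fin d → ℝ)) [IsProbabilityMeasure μ]
    (F : Fin d → ℝ → ℝ)
    (hF : ∀ (m : Fin d) (t : ℝ), F m t = (μ {y | y m ≤ t}).toReal)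
    (hFc : ∀ m, Continuous (F m)) :
    ∃ C : (Fin d → ℝ) → ℝ,
      (IsCopula d C ∧
        ∀ x : Fin d → ℝ, (μ (orthant x)).toReal = C fun m => F m (x m)) ∧
      ∀ C' : (Fin d → ℝ) → ℝ,
        (IsCopula d C' ∧
          ∀ x : Fin d → ℝ, (μ (orthant x)).toReal = C' fun m => F m (x m)) →
        Set.EqOn C' C (box d) :=
  sklar_theorem_general d μ F hF hFc
end
end

section
/- For every 0 < r < 2, the global weak Besov space W_G(r) is contained in the local weak Besov space W_L(r), and the inclusion is strict: there exists f ∈ L²([0,1]^d) with f ∈ W_L(r) but f ∉ W_G(r). -/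
open MeasureTheory ProbabilityTheory Real Set
open scoped ENNReal NNReal

noncomputable section

attribute [local instance] Classical.propDecidable

namespace CopulaEstimation

/-- The unit cube `[0,1]^d`. -/
def box (d : ℕ) : Set (Fin d → ℝ) := Set.univ.pi fun _ => Set.Icc (0 : ℝ) 1

/-- Rescaled and translated univariate function `h_{j,k}(x) = 2^{j/2} h(2^j x - k)`. -/
def wsc (h : ℝ → ℝ) (j : ℕ) (k : ℤ) (x : ℝ) : ℝ :=
  (2 : ℝ) ^ ((j : ℝ) / 2) * h ((2 : ℝ) ^ (j : ℕ) * x - (k : ℝ))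

/-- The index set `S_d = {0,1}^d \ {(0,…,0)}`. -/
def Sd (d : ℕ) : Type := {ε : Fin d → Bool // ε ≠ fun _ => false}

instance (d : ℕ) : Fintype (Sd d) := by unfold Sd; infer_instance

/-- Tensorized scaling function `φ_{j,k}`. -/
def tensS (φ : ℝ → ℝ) {d : ℕ} (j : ℕ) (k : Fin d → ℤ) (x : Fin d → ℝ) : ℝ :=
  ∏ m, wsc φ j (k m) (x m)

/-- Tensorized wavelet `ψ^ε_{j,k}`. -/
def tensW (φ ψ : ℝ → ℝ) {d : ℕ} (j : ℕ) (ε : Fin d → Bool) (k : Fin d → ℤ)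
    (x : Fin d → ℝ) : ℝ :=
  ∏ m, if ε m then wsc ψ j (k m) (x m) else wsc φ j (k m) (x m)

/-- Scaling coefficient `f_{j,k}` of a function supported on the unit cube. -/
def coefS (φ : ℝ → ℝ) {d : ℕ} (f : (Fin d → ℝ) → ℝ) (j : ℕ) (k : Fin d → ℤ) : ℝ :=
  ∫ x in box d, f x * tensS φ j k x

/-- Wavelet coefficient `f^ε_{j,k}` of a function supported on the unit cube. -/
def coefW (φ ψ : ℝ → ℝ) {d : ℕ} (f : (Fin d → ℝ) → ℝ) (j : ℕ) (k : Fin d → ℤ)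
    (ε : Fin d → Bool) : ℝ :=
  ∫ x in box d, f x * tensW φ ψ j ε k x

/-- The hypotheses on the pair `(φ, ψ)`: continuously differentiable, supported on `[0, L]`,
and generating, at every coarse level `j₀`, an orthonormal basis of `L²(ℝ^d)`
(orthonormality together with the Parseval identity). -/
def IsWaveletBasis (d : ℕ) (L : ℝ) (φ ψ : ℝ → ℝ) : Prop :=
  ContDiff ℝ 1 φ ∧ ContDiff ℝ 1 ψ ∧
  (∀ x, x ∉ Set.Icc (0 : ℝ) L → φ x = 0) ∧
  (∀ x, x ∉ Set.Icc (0 : ℝ) L → ψ x = 0) ∧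
  (∀ (j j' : ℕ) (k k' : Fin d → ℤ) (ε ε' : Sd d),
    ∫ x : Fin d → ℝ, tensW φ ψ j ε.1 k x * tensW φ ψ j' ε'.1 k' x
      = if j = j' ∧ k = k' ∧ ε = ε' then 1 else 0) ∧
  (∀ (j : ℕ) (k k' : Fin d → ℤ),
    ∫ x : Fin d → ℝ, tensS φ j k x * tensS φ j k' x = if k = k' then 1 else 0) ∧
  (∀ (j₀ j : ℕ), j₀ ≤ j → ∀ (k k' : Fin d → ℤ) (ε : Sd d),
    ∫ x : Fin d → ℝ, tensS φ j₀ k x * tensW φ ψ j ε.1 k' x = 0) ∧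
  (∀ (j₀ : ℕ) (f : (Fin d → ℝ) → ℝ), MemLp f 2 volume →
    ∫ x, (f x) ^ 2
      = (∑' k : Fin d → ℤ, (∫ x, f x * tensS φ j₀ k x) ^ 2)
        + ∑' (j : {j : ℕ // j₀ ≤ j}) (k : Fin d → ℤ) (ε : Sd d),
            (∫ x, f x * tensW φ ψ j.1 ε.1 k x) ^ 2)

/-- Membership in the Besov space `B^s_{2∞}` of `L²([0,1]^d)`, in terms of wavelet
coefficients. -/
def MemBesov (φ ψ : ℝ → ℝ) {d : ℕ} (s : ℝ) (f : (Fin d → ℝ) → ℝ) : Prop :=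
  (⨆ J : ℕ, ENNReal.ofReal ((2 : ℝ) ^ (2 * (J : ℝ) * s)) *
      ∑' (j : {j : ℕ // J < j}) (k : Fin d → ℤ) (ε : Sd d),
        ENNReal.ofReal ((coefW φ ψ f j.1 k ε.1) ^ 2)) < ⊤

/-- Membership in the local weak Besov space `W_L(r)`. -/
def MemWeakL (φ ψ : ℝ → ℝ) {d : ℕ} (r : ℝ) (f : (Fin d → ℝ) → ℝ) : Prop :=
  (⨆ lam ∈ Set.Ioc (0 : ℝ) 1, ENNReal.ofReal (lam ^ (r - 2)) *
      ∑' (j : ℕ) (k : Fin d → ℤ) (ε : Sd d),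
        (if |coefW φ ψ f j k ε.1| ≤ lam
          then ENNReal.ofReal ((coefW φ ψ f j k ε.1) ^ 2) else 0)) < ⊤

/-- Membership in the global weak Besov space `W_G(r)`. -/
def MemWeakG (φ ψ : ℝ → ℝ) {d : ℕ} (r : ℝ) (f : (Fin d → ℝ) → ℝ) : Prop :=
  (⨆ lam ∈ Set.Ioc (0 : ℝ) 1, ENNReal.ofReal (lam ^ (r - 2)) *
      ∑' (j : ℕ) (k : Fin d → ℤ) (ε : Sd d),
        (if (∑' k' : Fin d → ℤ, (coefW φ ψ f j k' ε.1) ^ 2) ≤ (2 : ℝ) ^ (d * j) * lam ^ 2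
          then ENNReal.ofReal ((coefW φ ψ f j k ε.1) ^ 2) else 0)) < ⊤

/-- Essential boundedness of `f` on `[0,1]^d`. -/
def MemLinf {d : ℕ} (f : (Fin d → ℝ) → ℝ) : Prop :=
  ∃ M : ℝ, ∀ᵐ x ∂(volume.restrict (box d)), |f x| ≤ M

end CopulaEstimation

/-!
Both halves are statements about the coefficient array `(j, k, ε) ↦ f^ε_{j,k}`. Call
`s = Σ_k (f^ε_{j,k})²` the energy of level `(j, ε)`. The global sum counts the whole level once
`λ² ≥ 2^{-dj} s`; testing the `W_G(r)` bound at that threshold gives `2^{dj} (2^{-dj} s)^{r/2} ≤ C`.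
So a level that the global sum misses at `λ` has `2^{dj} λ^r ≤ C`, or else `2^{dj} < s ≤ ‖f‖²` by
Bessel's inequality. Such a level has `O(2^{dj})` nonzero coefficients, each adding at most `λ²`
to the local sum, and the geometric sum over these levels is `O(λ^{2-r})`.

For strictness, put the coefficient `ρ^j` on the single wavelet `ψ^ε_{j,0}` at each level
`j ≥ c`, where `2^c ≥ L` keeps these wavelets inside the cube. For `2^{-d(2-r)/(2r)} < ρ < 1` the
coefficients are `r`-summable, which already gives `W_L(r)`, while `2^{dj} (2^{-dj} ρ^{2j})^{r/2}`
is unbounded, so the test above fails.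
-/

namespace CopulaEstimation

section SequenceSpace

variable {κ σ : Type*}

def levelEnergy (a : ℕ → κ → σ → ℝ) (j : ℕ) (e : σ) : ℝ := ∑' k, a j k e ^ 2

def localWeakSum (a : ℕ → κ → σ → ℝ) (lam : ℝ) : ℝ≥0∞ :=
  ∑' (j : ℕ) (k : κ) (e : σ), if |a j k e| ≤ lam then ENNReal.ofReal (a j k e ^ 2) else 0

def globalWeakSum (n : ℕ) (a : ℕ → κ → σ → ℝ) (lam : ℝ) : ℝ≥0∞ :=
  ∑' (j : ℕ) (k : κ) (e : σ),
    if levelEnergy a j e ≤ 2 ^ (n * j) * lam ^ 2 then ENNReal.ofReal (a j k e ^ 2) else 0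

def weakSup (S : ℝ → ℝ≥0∞) (r : ℝ) : ℝ≥0∞ :=
  ⨆ lam ∈ Ioc (0 : ℝ) 1, ENNReal.ofReal (lam ^ (r - 2)) * S lam

lemma ofReal_rpow_sub_two_mul {lam : ℝ} (hlam : 0 < lam) (r : ℝ) :
    ENNReal.ofReal (lam ^ (r - 2)) * ENNReal.ofReal (lam ^ (2 - r)) = 1 := by
  rw [← ENNReal.ofReal_mul (by positivity), ← Real.rpow_add hlam, sub_add_sub_cancel', sub_self,
    Real.rpow_zero, ENNReal.ofReal_one]

lemma weakSup_lt_top_iff {S : ℝ → ℝ≥0∞} {r : ℝ} :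
    weakSup S r < ⊤ ↔
      ∃ C : ℝ≥0, ∀ lam ∈ Ioc (0 : ℝ) 1, S lam ≤ C * ENNReal.ofReal (lam ^ (2 - r)) := by
  constructor
  · intro h
    refine ⟨(weakSup S r).toNNReal, fun lam hlam => ?_⟩
    rw [ENNReal.coe_toNNReal h.ne]
    calc S lam = ENNReal.ofReal (lam ^ (2 - r)) * (ENNReal.ofReal (lam ^ (r - 2)) * S lam) := by
          rw [← mul_assoc, mul_comm (ENNReal.ofReal _), ofReal_rpow_sub_two_mul hlam.1, one_mul]
      _ ≤ ENNReal.ofReal (lam ^ (2 - r)) * weakSup S r := by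
          gcongr
          exact le_iSup₂ (f := fun lam (_ : lam ∈ Ioc (0 : ℝ) 1) =>
            ENNReal.ofReal (lam ^ (r - 2)) * S lam) lam hlam
      _ = weakSup S r * ENNReal.ofReal (lam ^ (2 - r)) := mul_comm _ _
  · rintro ⟨C, hC⟩
    refine lt_of_le_of_lt (iSup₂_le fun lam hlam => ?_) (ENNReal.coe_lt_top (r := C))
    calc ENNReal.ofReal (lam ^ (r - 2)) * S lam
        ≤ ENNReal.ofReal (lam ^ (r - 2)) * (C * ENNReal.ofReal (lam ^ (2 - r))) := by
          gcongr; exact hC lam hlam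
      _ = C := by rw [mul_left_comm, ofReal_rpow_sub_two_mul hlam.1, mul_one]

lemma ofReal_levelEnergy_le_globalWeakSum {n : ℕ} {a : ℕ → κ → σ → ℝ} {lam : ℝ} {j : ℕ} {e : σ}
    (h : levelEnergy a j e ≤ 2 ^ (n * j) * lam ^ 2) :
    ENNReal.ofReal (levelEnergy a j e) ≤ globalWeakSum n a lam := by
  by_cases hs : Summable fun k => a j k e ^ 2
  · rw [levelEnergy, ENNReal.ofReal_tsum_of_nonneg (fun _ => sq_nonneg _) hs]
    calc ∑' k, ENNReal.ofReal (a j k e ^ 2)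
        ≤ ∑' (k : κ) (e' : σ), if levelEnergy a j e' ≤ 2 ^ (n * j) * lam ^ 2
            then ENNReal.ofReal (a j k e' ^ 2) else 0 :=
          ENNReal.tsum_le_tsum fun k => (if_pos h).symm.le.trans (ENNReal.le_tsum e)
      _ ≤ globalWeakSum n a lam := ENNReal.le_tsum j
  · simp [levelEnergy, tsum_eq_zero_of_not_summable hs]

lemma mul_rpow_half_le_of_mul_le {B x C r : ℝ} (hx : 0 < x) (h : B * x ≤ C * x ^ ((2 - r) / 2)) :
    B * x ^ (r / 2) ≤ C := by
  have hsplit : x = x ^ ((2 - r) / 2) * x ^ (r / 2) := by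
    rw [← Real.rpow_add hx, show (2 - r) / 2 + r / 2 = 1 by ring, Real.rpow_one]
  have hpos : 0 < x ^ ((2 - r) / 2) := Real.rpow_pos_of_pos hx _
  refine le_of_mul_le_mul_left ?_ hpos
  calc x ^ ((2 - r) / 2) * (B * x ^ (r / 2)) = B * (x ^ ((2 - r) / 2) * x ^ (r / 2)) := by ring
    _ = B * x := by rw [← hsplit]
    _ ≤ C * x ^ ((2 - r) / 2) := h
    _ = x ^ ((2 - r) / 2) * C := mul_comm _ _

-- Test the global bound at `λ = √(levelEnergy / 2 ^ (n * j))`, the smallest `λ` at which the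
-- level is counted in full.
lemma exists_levelEnergy_bound {n : ℕ} {a : ℕ → κ → σ → ℝ} {r : ℝ} (hr0 : 0 < r)
    (hG : weakSup (globalWeakSum n a) r < ⊤) :
    ∃ D : ℝ≥0, ∀ j e, levelEnergy a j e ≤ 2 ^ (n * j) →
      2 ^ (n * j) * (levelEnergy a j e / 2 ^ (n * j)) ^ (r / 2) ≤ D := by
  obtain ⟨C, hC⟩ := weakSup_lt_top_iff.1 hG
  refine ⟨C, fun j e hle => ?_⟩
  set B : ℝ := 2 ^ (n * j)
  set x := levelEnergy a j e / B
  have hB : 0 < B := by positivity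
  have hx0 : 0 ≤ x := div_nonneg (tsum_nonneg fun _ => sq_nonneg _) hB.le
  rcases hx0.eq_or_lt with hx | hx
  · rw [← hx, Real.zero_rpow (by positivity), mul_zero]
    exact C.coe_nonneg
  have hμ : Real.sqrt x ∈ Ioc (0 : ℝ) 1 :=
    ⟨Real.sqrt_pos.2 hx, Real.sqrt_le_one.2 ((div_le_one hB).2 hle)⟩
  have hs : levelEnergy a j e = B * Real.sqrt x ^ 2 := by
    rw [Real.sq_sqrt hx.le, mul_div_cancel₀ _ hB.ne']
  have h := (ofReal_levelEnergy_le_globalWeakSum hs.le).trans (hC _ hμ)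
  rw [← ENNReal.ofReal_coe_nnreal, ← ENNReal.ofReal_mul C.coe_nonneg,
    ENNReal.ofReal_le_ofReal_iff (by positivity), hs, Real.sq_sqrt hx.le, Real.sqrt_eq_rpow,
    ← Real.rpow_mul hx.le, one_div_mul_eq_div] at h
  exact mul_rpow_half_le_of_mul_le hx h

lemma tsum_ite_pow_le {b : ℕ} (hb : 2 ≤ b) (D : ℝ) :
    ∑' j : ℕ, (if (b : ℝ) ^ j ≤ D then ENNReal.ofReal ((b : ℝ) ^ j) else 0)
      ≤ ENNReal.ofReal (b * D) := by
  obtain ⟨N, hN⟩ := pow_unbounded_of_one_lt D (by exact_mod_cast hb : (1 : ℝ) < b)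
  have hlarge : ∀ j, N ≤ j → ¬ (b : ℝ) ^ j ≤ D := fun j hj hjD =>
    (hN.trans_le (pow_le_pow_right₀ (by exact_mod_cast (by omega : 1 ≤ b)) hj)).not_ge hjD
  rw [tsum_eq_sum (s := Finset.range N) fun j hj =>
    if_neg (hlarge j (by simpa using hj)), ← Finset.sum_filter]
  set s := (Finset.range N).filter fun j => (b : ℝ) ^ j ≤ D
  rcases s.eq_empty_or_nonempty with hs | hs
  · simp [hs]
  have hmax : (b : ℝ) ^ s.max' hs ≤ D := (Finset.mem_filter.1 (s.max'_mem hs)).2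
  have hgeom : ∑ j ∈ s, b ^ j < b ^ (s.max' hs + 1) :=
    Nat.geomSum_lt hb fun j hj => Nat.lt_succ_of_le (s.le_max' j hj)
  rw [← ENNReal.ofReal_sum_of_nonneg fun _ _ => by positivity]
  refine ENNReal.ofReal_le_ofReal ?_
  calc ∑ j ∈ s, (b : ℝ) ^ j = ((∑ j ∈ s, b ^ j : ℕ) : ℝ) := by push_cast; rfl
    _ ≤ (b : ℝ) ^ (s.max' hs + 1) := by exact_mod_cast hgeom.le
    _ = b * (b : ℝ) ^ s.max' hs := pow_succ' _ _
    _ ≤ b * D := by gcongr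

lemma pow_mul_rpow_le_of_lt_levelEnergy {n : ℕ} {a : ℕ → κ → σ → ℝ} {r : ℝ} (hr0 : 0 < r)
    {D E : ℝ} (hD : ∀ j e, levelEnergy a j e ≤ 2 ^ (n * j) →
      2 ^ (n * j) * (levelEnergy a j e / 2 ^ (n * j)) ^ (r / 2) ≤ D)
    (hE : ∀ j e, levelEnergy a j e ≤ E) {lam : ℝ} (hlam : lam ∈ Ioc (0 : ℝ) 1) {j : ℕ} {e : σ}
    (h : 2 ^ (n * j) * lam ^ 2 < levelEnergy a j e) :
    2 ^ (n * j) * lam ^ r ≤ max D E := by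
  have hB : (0 : ℝ) < 2 ^ (n * j) := by positivity
  by_cases hs : levelEnergy a j e ≤ 2 ^ (n * j)
  · have hlt : lam ^ r < (levelEnergy a j e / 2 ^ (n * j)) ^ (r / 2) := by
      rw [show lam ^ r = (lam ^ 2) ^ (r / 2) by
        rw [← Real.rpow_natCast, ← Real.rpow_mul hlam.1.le]; congr 1; push_cast; ring]
      exact Real.rpow_lt_rpow (by positivity) ((lt_div_iff₀' hB).2 h) (by positivity)
    exact le_max_of_le_left ((mul_le_mul_of_nonneg_left hlt.le hB.le).trans (hD j e hs))
  · have hlam_r : lam ^ r ≤ 1 := Real.rpow_le_one hlam.1.le hlam.2 hr0.le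
    refine le_max_of_le_right ?_
    nlinarith [hE j e, not_le.1 hs]

lemma localWeakSum_le_globalWeakSum_add (n : ℕ) (a : ℕ → κ → σ → ℝ) (lam : ℝ) :
    localWeakSum a lam ≤ globalWeakSum n a lam + ∑' (j : ℕ) (k : κ) (e : σ),
      if levelEnergy a j e ≤ 2 ^ (n * j) * lam ^ 2 then 0
      else if |a j k e| ≤ lam then ENNReal.ofReal (a j k e ^ 2) else 0 := by
  simp only [localWeakSum, globalWeakSum, ← ENNReal.tsum_add]
  refine ENNReal.tsum_le_tsum fun j => ENNReal.tsum_le_tsum fun k =>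
    ENNReal.tsum_le_tsum fun e => ?_
  split_ifs <;> simp

lemma badLevelTerm_le {n : ℕ} {a : ℕ → κ → σ → ℝ} {F : ℕ → Finset κ}
    (ha : ∀ j k e, k ∉ F j → a j k e = 0) {r : ℝ} {D : ℝ≥0} {lam : ℝ}
    (hbad : ∀ j e, ¬ levelEnergy a j e ≤ 2 ^ (n * j) * lam ^ 2 → 2 ^ (n * j) * lam ^ r ≤ D)
    (j : ℕ) (k : κ) (e : σ) :
    (if levelEnergy a j e ≤ 2 ^ (n * j) * lam ^ 2 then 0
      else if |a j k e| ≤ lam then ENNReal.ofReal (a j k e ^ 2) else 0)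
      ≤ if 2 ^ (n * j) * lam ^ r ≤ D then (if k ∈ F j then ENNReal.ofReal (lam ^ 2) else 0)
        else 0 := by
  by_cases hgood : levelEnergy a j e ≤ 2 ^ (n * j) * lam ^ 2
  · simp [hgood]
  rw [if_neg hgood, if_pos (hbad j e hgood)]
  by_cases hk : k ∈ F j
  · rw [if_pos hk]
    split_ifs with hsmall
    · exact ENNReal.ofReal_le_ofReal (sq_le_sq' (abs_le.1 hsmall).1 (abs_le.1 hsmall).2)
    · exact zero_le
  · simp [ha j k e hk]

lemma tsum_badLevels_le [Fintype σ] {n : ℕ} (hn : 1 ≤ n) {a : ℕ → κ → σ → ℝ}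
    {F : ℕ → Finset κ} {C₀ : ℕ} (hF : ∀ j, (F j).card ≤ C₀ * 2 ^ (n * j))
    (ha : ∀ j k e, k ∉ F j → a j k e = 0) {r : ℝ} {D : ℝ≥0} {lam : ℝ} (hlam : 0 < lam)
    (hbad : ∀ j e, ¬ levelEnergy a j e ≤ 2 ^ (n * j) * lam ^ 2 → 2 ^ (n * j) * lam ^ r ≤ D) :
    (∑' (j : ℕ) (k : κ) (e : σ),
      if levelEnergy a j e ≤ 2 ^ (n * j) * lam ^ 2 then 0
      else if |a j k e| ≤ lam then ENNReal.ofReal (a j k e ^ 2) else 0)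
      ≤ (Fintype.card σ * C₀ * 2 ^ n * D : ℝ≥0) * ENNReal.ofReal (lam ^ (2 - r)) := by
  set b : ℕ := 2 ^ n
  have hb : 2 ≤ b := by simpa using Nat.pow_le_pow_right two_pos hn
  have hlevel (j : ℕ) : (2 : ℝ) ^ (n * j) = (b : ℝ) ^ j := by push_cast [b]; rw [pow_mul]
  have hlamr : 0 < lam ^ r := Real.rpow_pos_of_pos hlam r
  have hlevelSum (j : ℕ) : (∑' (k : κ) (_ : σ), if 2 ^ (n * j) * lam ^ r ≤ D then
      (if k ∈ F j then ENNReal.ofReal (lam ^ 2) else 0) else 0)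
      ≤ ENNReal.ofReal (Fintype.card σ * C₀ * lam ^ 2) *
        if (b : ℝ) ^ j ≤ D / lam ^ r then ENNReal.ofReal ((b : ℝ) ^ j) else 0 := by
    simp only [hlevel, ← le_div_iff₀ hlamr]
    split_ifs
    · simp only [tsum_fintype, Finset.sum_const, Finset.card_univ, nsmul_eq_mul]
      rw [ENNReal.tsum_mul_left, tsum_eq_sum (s := F j) fun k hk => if_neg hk,
        Finset.sum_ite_mem, Finset.inter_self, Finset.sum_const, nsmul_eq_mul,
        ← ENNReal.ofReal_natCast, ← ENNReal.ofReal_natCast, ← ENNReal.ofReal_mul (by positivity),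
        ← ENNReal.ofReal_mul (by positivity), ← ENNReal.ofReal_mul (by positivity)]
      refine ENNReal.ofReal_le_ofReal ?_
      have hcard : ((F j).card : ℝ) ≤ C₀ * (b : ℝ) ^ j := by
        rw [← hlevel]; exact_mod_cast hF j
      have : (0 : ℝ) ≤ Fintype.card σ * lam ^ 2 := by positivity
      nlinarith
    · simp
  calc _ ≤ ∑' (j : ℕ) (k : κ) (_ : σ), if 2 ^ (n * j) * lam ^ r ≤ D then
          (if k ∈ F j then ENNReal.ofReal (lam ^ 2) else 0) else 0 :=
        ENNReal.tsum_le_tsum fun j => ENNReal.tsum_le_tsum fun k =>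
          ENNReal.tsum_le_tsum fun e => badLevelTerm_le ha hbad j k e
    _ ≤ ENNReal.ofReal (Fintype.card σ * C₀ * lam ^ 2) * ENNReal.ofReal (b * (D / lam ^ r)) := by
        refine (ENNReal.tsum_le_tsum hlevelSum).trans ?_
        rw [ENNReal.tsum_mul_left]
        gcongr
        exact tsum_ite_pow_le hb _
    _ = _ := by
        rw [← ENNReal.ofReal_mul (by positivity), ← ENNReal.ofReal_coe_nnreal,
          ← ENNReal.ofReal_mul (by positivity), Real.rpow_sub hlam, Real.rpow_two]
        congr 1
        push_cast [b]
        field_simp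

theorem weakSup_localWeakSum_lt_top [Fintype σ] {n : ℕ} (hn : 1 ≤ n) {r : ℝ} (hr0 : 0 < r)
    {a : ℕ → κ → σ → ℝ} {F : ℕ → Finset κ} {C₀ : ℕ} (hF : ∀ j, (F j).card ≤ C₀ * 2 ^ (n * j))
    (ha : ∀ j k e, k ∉ F j → a j k e = 0) {E : ℝ} (hE : ∀ j e, levelEnergy a j e ≤ E)
    (hG : weakSup (globalWeakSum n a) r < ⊤) : weakSup (localWeakSum a) r < ⊤ := by
  obtain ⟨C, hC⟩ := weakSup_lt_top_iff.1 hG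
  obtain ⟨D, hD⟩ := exists_levelEnergy_bound hr0 hG
  set D' : ℝ≥0 := max D E.toNNReal
  have hbad : ∀ lam ∈ Ioc (0 : ℝ) 1, ∀ j e, ¬ levelEnergy a j e ≤ 2 ^ (n * j) * lam ^ 2 →
      2 ^ (n * j) * lam ^ r ≤ D' := fun lam hlam j e h =>
    (pow_mul_rpow_le_of_lt_levelEnergy hr0 hD hE hlam (not_le.1 h)).trans
      (by rw [NNReal.coe_max, Real.coe_toNNReal']; exact max_le_max le_rfl (le_max_left _ _))
  refine weakSup_lt_top_iff.2 ⟨C + Fintype.card σ * C₀ * 2 ^ n * D', fun lam hlam => ?_⟩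
  calc localWeakSum a lam ≤ globalWeakSum n a lam + _ :=
        localWeakSum_le_globalWeakSum_add n a lam
    _ ≤ C * ENNReal.ofReal (lam ^ (2 - r))
          + (Fintype.card σ * C₀ * 2 ^ n * D' : ℝ≥0) * ENNReal.ofReal (lam ^ (2 - r)) :=
        add_le_add (hC lam hlam) (tsum_badLevels_le hn hF ha hlam.1 (hbad lam hlam))
    _ = _ := by push_cast; ring

lemma localWeakSum_le_rpow_mul (a : ℕ → κ → σ → ℝ) {r lam : ℝ} (hr2 : r ≤ 2) :
    localWeakSum a lam ≤
      ENNReal.ofReal (lam ^ (2 - r)) *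
        ∑' (j : ℕ) (k : κ) (e : σ), ENNReal.ofReal (|a j k e| ^ r) := by
  simp only [localWeakSum, ← ENNReal.tsum_mul_left]
  refine ENNReal.tsum_le_tsum fun j => ENNReal.tsum_le_tsum fun k =>
    ENNReal.tsum_le_tsum fun e => ?_
  split_ifs with h
  · rw [← ENNReal.ofReal_mul (Real.rpow_nonneg ((abs_nonneg _).trans h) _)]
    refine ENNReal.ofReal_le_ofReal ?_
    calc a j k e ^ 2 = |a j k e| ^ (2 - r) * |a j k e| ^ r := by
          rw [← Real.rpow_add' (abs_nonneg _) (by norm_num), sub_add_cancel, Real.rpow_two, sq_abs]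
      _ ≤ lam ^ (2 - r) * |a j k e| ^ r := by
          gcongr
  · exact zero_le

theorem weakSup_localWeakSum_lt_top_of_tsum_rpow {a : ℕ → κ → σ → ℝ} {r : ℝ} (hr2 : r ≤ 2)
    (h : ∑' (j : ℕ) (k : κ) (e : σ), ENNReal.ofReal (|a j k e| ^ r) ≠ ⊤) :
    weakSup (localWeakSum a) r < ⊤ :=
  weakSup_lt_top_iff.2 ⟨_, fun _ _ => by
    rw [ENNReal.coe_toNNReal h, mul_comm]; exact localWeakSum_le_rpow_mul a hr2⟩

def singleArray (c : ℕ) (k₀ : κ) (e₀ : σ) (β : ℕ → ℝ) (j : ℕ) (k : κ) (e : σ) : ℝ :=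
  if c ≤ j ∧ k = k₀ ∧ e = e₀ then β j else 0

lemma tsum_ofReal_rpow_singleArray_le {r : ℝ} (hr0 : 0 < r) (c : ℕ) (k₀ : κ) (e₀ : σ)
    (β : ℕ → ℝ) :
    ∑' (j : ℕ) (k : κ) (e : σ), ENNReal.ofReal (|singleArray c k₀ e₀ β j k e| ^ r)
      ≤ ∑' j, ENNReal.ofReal (|β j| ^ r) := by
  have hzero : (0 : ℝ) ^ r = 0 := Real.zero_rpow hr0.ne'
  refine ENNReal.tsum_le_tsum fun j => ?_
  rw [tsum_eq_single k₀ fun k hk => by simp [singleArray, hk, hzero],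
    tsum_eq_single e₀ fun e he => by simp [singleArray, he, hzero]]
  by_cases hj : c ≤ j <;> simp [singleArray, hj, hzero]

lemma levelEnergy_singleArray {c j : ℕ} (hj : c ≤ j) (k₀ : κ) (e₀ : σ) (β : ℕ → ℝ) :
    levelEnergy (singleArray c k₀ e₀ β) j e₀ = β j ^ 2 := by
  rw [levelEnergy, tsum_eq_single k₀ fun k hk => by simp [singleArray, hk]]
  simp [singleArray, hj]

theorem weakSup_localWeakSum_singleArray_lt_top {r : ℝ} (hr0 : 0 < r) (hr2 : r ≤ 2) (c : ℕ)
    (k₀ : κ) (e₀ : σ) {β : ℕ → ℝ} (hβ : Summable fun j => |β j| ^ r) :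
    weakSup (localWeakSum (singleArray c k₀ e₀ β)) r < ⊤ := by
  refine weakSup_localWeakSum_lt_top_of_tsum_rpow hr2
    (ne_top_of_le_ne_top ?_ (tsum_ofReal_rpow_singleArray_le hr0 c k₀ e₀ β))
  rw [← ENNReal.ofReal_tsum_of_nonneg (fun _ => by positivity) hβ]
  exact ENNReal.ofReal_ne_top

theorem weakSup_globalWeakSum_singleArray_eq_top {n : ℕ} {r : ℝ} (hr0 : 0 < r) {c : ℕ} (k₀ : κ)
    (e₀ : σ) {β : ℕ → ℝ} (hβ : ∀ j, β j ^ 2 ≤ 2 ^ (n * j))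
    (hunbdd : ∀ D : ℝ, ∃ j, c ≤ j ∧ D < 2 ^ (n * j) * (β j ^ 2 / 2 ^ (n * j)) ^ (r / 2)) :
    weakSup (globalWeakSum n (singleArray c k₀ e₀ β)) r = ⊤ := by
  by_contra hG
  obtain ⟨D, hD⟩ := exists_levelEnergy_bound hr0 (lt_top_iff_ne_top.2 hG)
  obtain ⟨j, hj, hDj⟩ := hunbdd D
  have := hD j e₀
  rw [levelEnergy_singleArray hj] at this
  exact (this (hβ j)).not_gt hDj

end SequenceSpace

lemma two_pow_mul_rpow_eq (n j : ℕ) {r : ℝ} (hr0 : 0 < r) :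
    (2 : ℝ) ^ (n * j) * ((((2 : ℝ) ^ (-(n * (2 - r) / (4 * r)))) ^ j) ^ 2 / 2 ^ (n * j)) ^ (r / 2)
      = ((2 : ℝ) ^ (n * (2 - r) / 4)) ^ j := by
  simp only [← Real.rpow_natCast, ← Real.rpow_mul zero_le_two, ← Real.rpow_sub zero_lt_two,
    ← Real.rpow_add zero_lt_two]
  congr 1
  push_cast
  field_simp
  ring

lemma inner_toLp_toLp_eq_integral {α : Type*} [MeasurableSpace α] {μ : Measure α} {u v : α → ℝ}
    (hu : MemLp u 2 μ) (hv : MemLp v 2 μ) :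
    inner ℝ (hu.toLp u) (hv.toLp v) = ∫ x, u x * v x ∂μ := by
  rw [L2.inner_def]
  refine integral_congr_ae ?_
  filter_upwards [hu.coeFn_toLp, hv.coeFn_toLp] with x hux hvx
  rw [hux, hvx, Real.inner_apply]

lemma measurableSet_box (d : ℕ) : MeasurableSet (box d) :=
  MeasurableSet.univ_pi fun _ => measurableSet_Icc

section Wavelets

variable {L : ℝ} {φ ψ : ℝ → ℝ} {d : ℕ}

lemma bounds_of_wsc_ne_zero {h : ℝ → ℝ} (h0 : ∀ x, x ∉ Icc (0 : ℝ) L → h x = 0) {j : ℕ} {k : ℤ}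
    {x : ℝ} (hx : wsc h j k x ≠ 0) : (k : ℝ) ≤ 2 ^ j * x ∧ 2 ^ j * x ≤ k + L := by
  by_contra hc
  refine hx ?_
  rw [wsc, h0 _ fun hmem => hc ⟨by linarith [hmem.1], by linarith [hmem.2]⟩, mul_zero]

lemma tensW_eq_prod (j : ℕ) (ε : Fin d → Bool) (k : Fin d → ℤ) (x : Fin d → ℝ) :
    tensW φ ψ j ε k x = ∏ m, wsc (if ε m then ψ else φ) j (k m) (x m) :=
  Finset.prod_congr rfl fun m _ => by split_ifs <;> rfl

lemma bounds_of_tensW_ne_zero (hφ : ∀ x, x ∉ Icc (0 : ℝ) L → φ x = 0)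
    (hψ : ∀ x, x ∉ Icc (0 : ℝ) L → ψ x = 0) {j : ℕ} {ε : Fin d → Bool} {k : Fin d → ℤ}
    {x : Fin d → ℝ} (hx : tensW φ ψ j ε k x ≠ 0) (m : Fin d) :
    (k m : ℝ) ≤ 2 ^ j * x m ∧ 2 ^ j * x m ≤ k m + L := by
  rw [tensW_eq_prod] at hx
  refine bounds_of_wsc_ne_zero ?_ (Finset.prod_ne_zero_iff.1 hx m (Finset.mem_univ m))
  split_ifs
  exacts [hψ, hφ]

lemma continuous_tensW (hφ : Continuous φ) (hψ : Continuous ψ) (j : ℕ) (ε : Fin d → Bool)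
    (k : Fin d → ℤ) : Continuous (tensW φ ψ j ε k) := by
  unfold tensW wsc
  refine continuous_finsetProd _ fun m _ => ?_
  split_ifs <;> fun_prop

lemma hasCompactSupport_tensW (hφ : ∀ x, x ∉ Icc (0 : ℝ) L → φ x = 0)
    (hψ : ∀ x, x ∉ Icc (0 : ℝ) L → ψ x = 0) (j : ℕ) (ε : Fin d → Bool) (k : Fin d → ℤ) :
    HasCompactSupport (tensW φ ψ j ε k) := by
  refine HasCompactSupport.intro (isCompact_univ_pi fun m =>
    isCompact_Icc (a := (k m : ℝ) / 2 ^ j) (b := (k m + L) / 2 ^ j)) fun x hx => ?_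
  by_contra h0
  refine hx (Set.mem_univ_pi.2 fun m => ?_)
  obtain ⟨h1, h2⟩ := bounds_of_tensW_ne_zero hφ hψ h0 m
  exact ⟨(div_le_iff₀' (by positivity)).2 h1, (le_div_iff₀' (by positivity)).2 h2⟩

lemma memLp_tensW (hφc : Continuous φ) (hψc : Continuous ψ)
    (hφ : ∀ x, x ∉ Icc (0 : ℝ) L → φ x = 0) (hψ : ∀ x, x ∉ Icc (0 : ℝ) L → ψ x = 0)
    (j : ℕ) (ε : Fin d → Bool) (k : Fin d → ℤ) (p : ℝ≥0∞) :
    MemLp (tensW φ ψ j ε k) p volume :=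
  (continuous_tensW hφc hψc j ε k).memLp_of_hasCompactSupport (hasCompactSupport_tensW hφ hψ j ε k)

/-- The translations `k` for which `ψ^ε_{j,k}` can meet the unit cube. -/
def cubeTranslates (L : ℝ) (d j : ℕ) : Finset (Fin d → ℤ) :=
  Fintype.piFinset fun _ => Finset.Icc (-(⌈L⌉₊ : ℤ)) (2 ^ j)

lemma card_cubeTranslates_le (L : ℝ) (d j : ℕ) :
    (cubeTranslates L d j).card ≤ (⌈L⌉₊ + 2) ^ d * 2 ^ (d * j) := by
  have hcard : (Finset.Icc (-(⌈L⌉₊ : ℤ)) (2 ^ j)).card = 2 ^ j + 1 + ⌈L⌉₊ := by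
    rw [Int.card_Icc, sub_neg_eq_add]
    exact_mod_cast Int.toNat_natCast _
  rw [cubeTranslates, Fintype.card_piFinset, Finset.prod_const, Finset.card_univ, Fintype.card_fin,
    hcard, mul_comm d j, pow_mul, ← mul_pow]
  exact Nat.pow_le_pow_left (by nlinarith [Nat.one_le_two_pow (n := j)]) d

lemma coefW_eq_zero_of_notMem (hφ : ∀ x, x ∉ Icc (0 : ℝ) L → φ x = 0)
    (hψ : ∀ x, x ∉ Icc (0 : ℝ) L → ψ x = 0) (f : (Fin d → ℝ) → ℝ) {j : ℕ} {k : Fin d → ℤ}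
    (ε : Fin d → Bool) (hk : k ∉ cubeTranslates L d j) : coefW φ ψ f j k ε = 0 := by
  refine setIntegral_eq_zero_of_forall_eq_zero fun x hx => ?_
  by_contra hfx
  refine hk (Fintype.mem_piFinset.2 fun m => Finset.mem_Icc.2 ?_)
  obtain ⟨h1, h2⟩ := bounds_of_tensW_ne_zero hφ hψ (right_ne_zero_of_mul hfx) m
  obtain ⟨hx0, hx1⟩ := Set.mem_univ_pi.1 hx m
  have hpow : (0 : ℝ) < 2 ^ j := by positivity
  constructor
  · have : -(⌈L⌉₊ : ℝ) ≤ k m := by nlinarith [Nat.le_ceil L]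
    exact_mod_cast this
  · have : (k m : ℝ) ≤ 2 ^ j := by nlinarith
    exact_mod_cast this

lemma IsWaveletBasis.memLp_tensW (hwav : IsWaveletBasis d L φ ψ) (j : ℕ) (ε : Fin d → Bool)
    (k : Fin d → ℤ) : MemLp (tensW φ ψ j ε k) 2 volume :=
  CopulaEstimation.memLp_tensW hwav.1.continuous hwav.2.1.continuous hwav.2.2.1 hwav.2.2.2.1 j ε k 2

lemma IsWaveletBasis.orthonormal_tensW (hwav : IsWaveletBasis d L φ ψ) (j : ℕ) (ε : Sd d) :
    Orthonormal ℝ fun k => (hwav.memLp_tensW j ε.1 k).toLp _ := by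
  refine orthonormal_iff_ite.2 fun k k' => ?_
  rw [inner_toLp_toLp_eq_integral, hwav.2.2.2.2.1 j j k k' ε ε]
  simp

def coefArray (φ ψ : ℝ → ℝ) (f : (Fin d → ℝ) → ℝ) (j : ℕ) (k : Fin d → ℤ) (ε : Sd d) : ℝ :=
  coefW φ ψ f j k ε.1

lemma memWeakL_iff {r : ℝ} {f : (Fin d → ℝ) → ℝ} :
    MemWeakL φ ψ r f ↔ weakSup (localWeakSum (coefArray φ ψ f)) r < ⊤ := Iff.rfl

lemma memWeakG_iff {r : ℝ} {f : (Fin d → ℝ) → ℝ} :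
    MemWeakG φ ψ r f ↔ weakSup (globalWeakSum d (coefArray φ ψ f)) r < ⊤ := Iff.rfl

lemma IsWaveletBasis.exists_levelEnergy_le (hwav : IsWaveletBasis d L φ ψ)
    {f : (Fin d → ℝ) → ℝ} (hf : MemLp f 2 (volume.restrict (box d))) :
    ∃ E, ∀ j ε, levelEnergy (coefArray φ ψ f) j ε ≤ E := by
  have hg := (memLp_indicator_iff_restrict (measurableSet_box d)).2 hf
  refine ⟨‖hg.toLp _‖ ^ 2, fun j ε => ?_⟩
  have hcoef (k) :
      coefArray φ ψ f j k ε = inner ℝ ((hwav.memLp_tensW j ε.1 k).toLp _) (hg.toLp _) := by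
    rw [inner_toLp_toLp_eq_integral, coefArray, coefW, ← integral_indicator (measurableSet_box d)]
    congr 1 with x
    by_cases hx : x ∈ box d <;> simp [hx, mul_comm]
  calc levelEnergy (coefArray φ ψ f) j ε
      = ∑' k, ‖inner ℝ ((hwav.memLp_tensW j ε.1 k).toLp _) (hg.toLp _)‖ ^ 2 := by
        simp only [levelEnergy, hcoef, Real.norm_eq_abs, sq_abs]
    _ ≤ _ := (hwav.orthonormal_tensW j ε).tsum_inner_products_le _

theorem memWeakL_of_memWeakG (hd : 1 ≤ d) (hwav : IsWaveletBasis d L φ ψ) {r : ℝ} (hr0 : 0 < r)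
    {f : (Fin d → ℝ) → ℝ} (hf : MemLp f 2 (volume.restrict (box d))) (hG : MemWeakG φ ψ r f) :
    MemWeakL φ ψ r f :=
  have ⟨_E, hE⟩ := hwav.exists_levelEnergy_le hf
  weakSup_localWeakSum_lt_top hd hr0 (card_cubeTranslates_le L d)
    (fun _ _ ε hk => coefW_eq_zero_of_notMem hwav.2.2.1 hwav.2.2.2.1 f ε.1 hk) hE hG

lemma tensW_eq_zero_of_notMem_box (hφ : ∀ x, x ∉ Icc (0 : ℝ) L → φ x = 0)
    (hψ : ∀ x, x ∉ Icc (0 : ℝ) L → ψ x = 0) {j : ℕ} (hj : L ≤ 2 ^ j) (ε : Fin d → Bool)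
    {x : Fin d → ℝ} (hx : x ∉ box d) : tensW φ ψ j ε 0 x = 0 := by
  by_contra h
  refine hx (Set.mem_univ_pi.2 fun m => ?_)
  obtain ⟨h1, h2⟩ := bounds_of_tensW_ne_zero hφ hψ h m
  have hpow : (0 : ℝ) < 2 ^ j := by positivity
  simp only [Pi.zero_apply, Int.cast_zero, zero_add] at h1 h2
  exact ⟨nonneg_of_mul_nonneg_right h1 hpow, le_of_mul_le_mul_left (by linarith) hpow⟩

lemma IsWaveletBasis.memLp_tensW_box (hwav : IsWaveletBasis d L φ ψ) (j : ℕ) (ε : Fin d → Bool)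
    (k : Fin d → ℤ) : MemLp (tensW φ ψ j ε k) 2 (volume.restrict (box d)) :=
  (hwav.memLp_tensW j ε k).restrict _

lemma IsWaveletBasis.inner_tensW_box (hwav : IsWaveletBasis d L φ ψ) {i : ℕ} (hi : L ≤ 2 ^ i)
    (ε₀ : Sd d) (j : ℕ) (k : Fin d → ℤ) (ε : Sd d) :
    inner ℝ ((hwav.memLp_tensW_box j ε.1 k).toLp _) ((hwav.memLp_tensW_box i ε₀.1 0).toLp _)
      = if j = i ∧ k = 0 ∧ ε = ε₀ then 1 else 0 := by
  rw [inner_toLp_toLp_eq_integral, setIntegral_eq_integral_of_forall_compl_eq_zero fun x hx => by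
    rw [tensW_eq_zero_of_notMem_box hwav.2.2.1 hwav.2.2.2.1 hi _ hx, mul_zero]]
  exact hwav.2.2.2.2.1 j i k 0 ε ε₀

-- `L ≤ 2 ^ c` puts the supports of the `ψ^{ε₀}_{j,0}`, `j ≥ c`, inside the unit cube, so that
-- they stay orthonormal in `L²([0,1]^d)`.
lemma IsWaveletBasis.exists_coefArray_eq (hwav : IsWaveletBasis d L φ ψ) {c : ℕ}
    (hc : L ≤ 2 ^ c) (ε₀ : Sd d) {β : ℕ → ℝ} (hβ : Summable fun j => β j ^ 2) :
    ∃ f : (Fin d → ℝ) → ℝ, MemLp f 2 (volume.restrict (box d)) ∧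
      coefArray φ ψ f = singleArray c 0 ε₀ β := by
  let e (i : {j // c ≤ j}) := (hwav.memLp_tensW_box i.1 ε₀.1 0).toLp _
  have hinner (j k ε) (i : {j // c ≤ j}) : inner ℝ ((hwav.memLp_tensW_box j ε.1 k).toLp _) (e i)
      = if j = i.1 ∧ k = 0 ∧ ε = ε₀ then 1 else 0 :=
    hwav.inner_tensW_box (hc.trans (pow_le_pow_right₀ one_le_two i.2)) ε₀ j k ε
  have he : Orthonormal ℝ e := orthonormal_iff_ite.2 fun i i' => by
    rw [hinner]; simp [Subtype.ext_iff]
  have hsum : Summable fun i : {j // c ≤ j} => β i.1 • e i :=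
    (he.orthogonalFamily.summable_iff_norm_sq_summable fun i => β i.1).2
      (by simp only [Real.norm_eq_abs, sq_abs]; exact hβ.comp_injective Subtype.val_injective)
  set F := ∑' i, β i.1 • e i
  refine ⟨F, Lp.memLp F, funext fun j => funext fun k => funext fun ε => ?_⟩
  have hcoef : coefArray φ ψ F j k ε = inner ℝ ((hwav.memLp_tensW_box j ε.1 k).toLp _) F := by
    conv_rhs => rw [← Lp.toLp_coeFn F (Lp.memLp F)]
    rw [real_inner_comm, inner_toLp_toLp_eq_integral]
    rfl
  have hseries := (hsum.hasSum.mapL (innerSL ℝ ((hwav.memLp_tensW_box j ε.1 k).toLp _))).tsum_eq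
  simp only [innerSL_apply_apply, real_inner_smul_right, hinner] at hseries
  rw [hcoef, ← hseries, singleArray]
  split_ifs with h
  · rw [tsum_eq_single ⟨j, h.1⟩ fun i hi =>
      by rw [if_neg fun h' => hi (Subtype.ext h'.1.symm), mul_zero]]
    simp [h.2]
  · refine (tsum_congr fun i => ?_).trans tsum_zero
    have := i.2
    split_ifs <;> grind

theorem IsWaveletBasis.exists_memWeakL_not_memWeakG (hd : 1 ≤ d) (hwav : IsWaveletBasis d L φ ψ)
    {r : ℝ} (hr0 : 0 < r) (hr2 : r < 2) :
    ∃ f : (Fin d → ℝ) → ℝ, MemLp f 2 (volume.restrict (box d)) ∧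
      MemWeakL φ ψ r f ∧ ¬ MemWeakG φ ψ r f := by
  obtain ⟨c, hc⟩ := pow_unbounded_of_one_lt L one_lt_two
  have ε₀ : Sd d := ⟨fun _ => true, fun h => by simpa using congrFun h ⟨0, hd⟩⟩
  -- `ρ < 1` makes `∑ ρ ^ (r * j)` finite, while on level `j` the test of
  -- `exists_levelEnergy_bound` equals `(2 ^ (d * (2 - r) / 4)) ^ j` (`two_pow_mul_rpow_eq`).
  set ρ : ℝ := 2 ^ (-(d * (2 - r) / (4 * r)))
  have hρ0 : 0 < ρ := by positivity
  have hdr : 0 < (d : ℝ) * (2 - r) := mul_pos (by exact_mod_cast hd) (by linarith)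
  have hρ1 : ρ < 1 :=
    Real.rpow_lt_one_of_one_lt_of_neg one_lt_two (neg_neg_of_pos (div_pos hdr (by positivity)))
  have hq : 1 < (2 : ℝ) ^ (d * (2 - r) / 4) := Real.one_lt_rpow one_lt_two (by positivity)
  obtain ⟨f, hf, hcoef⟩ := hwav.exists_coefArray_eq hc.le ε₀ (β := (ρ ^ ·))
    ((summable_geometric_of_lt_one (by positivity) (pow_lt_one₀ hρ0.le hρ1 two_ne_zero)).congr
      fun j => by rw [← pow_mul, ← pow_mul, mul_comm])
  refine ⟨f, hf, ?_, ?_⟩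
  · rw [memWeakL_iff, hcoef]
    refine weakSup_localWeakSum_singleArray_lt_top hr0 hr2.le c 0 ε₀ ?_
    exact (summable_geometric_of_lt_one (by positivity) (Real.rpow_lt_one hρ0.le hρ1 hr0)).congr
      fun j => by rw [abs_of_pos (pow_pos hρ0 j), Real.rpow_pow_comm hρ0.le]
  · have hsmall (j : ℕ) : (ρ ^ j) ^ 2 ≤ 2 ^ (d * j) :=
      (pow_le_one₀ (by positivity) (pow_le_one₀ hρ0.le hρ1.le)).trans (one_le_pow₀ one_le_two)
    have hunbdd (D : ℝ) : ∃ j, c ≤ j ∧ D < 2 ^ (d * j) * ((ρ ^ j) ^ 2 / 2 ^ (d * j)) ^ (r / 2) := by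
      obtain ⟨n, hn⟩ := pow_unbounded_of_one_lt D hq
      refine ⟨n + c, Nat.le_add_left c n, ?_⟩
      rw [two_pow_mul_rpow_eq d _ hr0]
      exact hn.trans_le (pow_le_pow_right₀ hq.le (Nat.le_add_right n c))
    rw [memWeakG_iff, hcoef, weakSup_globalWeakSum_singleArray_eq_top hr0 0 ε₀ hsmall hunbdd]
    exact lt_irrefl ⊤

end Wavelets

end CopulaEstimation

open CopulaEstimation in
theorem weak_besov_strict_inclusion_general
    (d : ℕ) (hd : 2 ≤ d) (L : ℝ) (φ ψ : ℝ → ℝ)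
    (hwav : IsWaveletBasis d L φ ψ) (r : ℝ) (hr0 : 0 < r) (hr2 : r < 2) :
    (∀ f : (Fin d → ℝ) → ℝ, MemLp f 2 (volume.restrict (box d)) →
      MemWeakG φ ψ r f → MemWeakL φ ψ r f) ∧
    ∃ f : (Fin d → ℝ) → ℝ, MemLp f 2 (volume.restrict (box d)) ∧
      MemWeakL φ ψ r f ∧ ¬ MemWeakG φ ψ r f :=
  ⟨fun _ hf hG => memWeakL_of_memWeakG (by omega) hwav hr0 hf hG,
    hwav.exists_memWeakL_not_memWeakG (by omega) hr0 hr2⟩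

open CopulaEstimation in
/-- Proposition `linclus`: for `0 < r < 2`, the global weak Besov space
`W_G(r)` is strictly included in the local weak Besov space `W_L(r)`. -/
theorem weak_besov_strict_inclusion
    (d : ℕ) (hd : 2 ≤ d) (L : ℝ) (hL : 1 ≤ L) (φ ψ : ℝ → ℝ)
    (hwav : IsWaveletBasis d L φ ψ) (r : ℝ) (hr0 : 0 < r) (hr2 : r < 2) :
    (∀ f : (Fin d → ℝ) → ℝ, MemLp f 2 (volume.restrict (box d)) →
      MemWeakG φ ψ r f → MemWeakL φ ψ r f) ∧
    ∃ f : (Fin d → ℝ) → ℝ, MemLp f 2 (volume.restrict (box d)) ∧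
      MemWeakL φ ψ r f ∧ ¬ MemWeakG φ ψ r f :=
  weak_besov_strict_inclusion_general d hd L φ ψ hwav r hr0 hr2
end
end

section
/- Let d ≥ 1 be an integer, s > 0, and let α be a real with d/2 ≤ α < s + d/2. Let (c^ε_{j,k}) be any family of reals, indexed by j ∈ ℕ, k ∈ {0,…,2^j − 1}^d and ε ∈ S_d = {0,1}^d \ {0}, such that for each j and each ε exactly ⌊2^{(2dα/(2s+d)) j}⌋ of the coefficients (c^ε_{j,k})_k are equal to (2^d − 1)^{-1} 2^{-αj} and all the others are 0. Then: (i) sup_{0 < λ ≤ 1} λ^{2d/(2s+d)} Σ_{j,k,ε} 1{|c^ε_{j,k}| > λ} < ∞; (ii) sup_{J ≥ 0} 2^{2J ds/(2s+d)} Σ_{j > J} Σ_{k,ε} (c^ε_{j,k})² < ∞; and (iii) sup_{0 < λ ≤ 1} λ^{2d/(2s+d)} Σ_{j ≥ 0} 2^{dj} Σ_ε 1{Σ_k (c^ε_{j,k})² > 2^{dj} λ²} = ∞. In other words, the coefficient array satisfies the defining conditions of the local weak Besov space W_L(2d/(2s+d)) and of the Besov space B^{ds/(2s+d)}_{2∞},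 but fails the defining condition of the global weak Besov space W_G(2d/(2s+d)). -/
/-!
At level `j` each of the `|S_d|` directions carries `N_j = ⌊2^{βj}⌋` coefficients of size
`v_j ≍ 2^{-αj}`, where `β = 2dα/(2s+d) = rα` with `r = 2d/(2s+d)`.

* `W_L(r)`: only the levels with `2^{-αj} > λ` contribute to the count, i.e. those with
  `2^{βj} < λ^{-r}`, so the count is a geometric sum dominated by its last term `≲ λ^{-r}`.
* `B^σ_{2∞}`, `σ = ds/(2s+d)`: the energy of level `j` is `N_j v_j² ≤ 2^{-(2α-β)j}`, and
  `2σ ≤ 2α - β` is equivalent to `α ≥ d/2`.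
* `W_G(r)`: for `λ_j² ≍ 2^{-(2α-β+d)j}`, just below `2^{-dj}` times the energy of level `j`,
  that level alone contributes `2^{dj}` to the sum, so the supremum is at least
  `λ_j^r 2^{dj} ≍ 2^{(d - r(2α-β+d)/2)j}`; this exponent is positive exactly when `α < s + d/2`.
-/

open Set

open scoped ENNReal

noncomputable section

attribute [local instance] Classical.propDecidable

namespace SparseArray

/-- The index set `S_d = {0,1}^d \ {(0,…,0)}`. -/
def Sd (d : ℕ) : Type := {ε : Fin d → Bool // ε ≠ fun _ => false}

instance (d : ℕ) : Fintype (Sd d) := by unfold Sd; infer_instance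

end SparseArray

namespace SparseArray

theorem tsum_ite_pow_lt_le {q x : ℝ} (hq : 1 < q) (hx : 0 < x) :
    ∑' j : ℕ, (if q ^ j < x then ENNReal.ofReal (q ^ j) else 0) ≤
      ENNReal.ofReal (q / (q - 1) * x) := by
  have hN : ∃ N, x ≤ q ^ N := (pow_unbounded_of_one_lt x hq).imp fun _ => le_of_lt
  set N := Nat.find hN
  have hvanish : ∀ j ∉ Finset.range N, (if q ^ j < x then ENNReal.ofReal (q ^ j) else 0) = 0 :=
    fun j hj => if_neg <| not_lt.2 <|
      (Nat.find_spec hN).trans (pow_le_pow_right₀ hq.le (not_lt.1 (Finset.mem_range.not.1 hj)))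
  have hqN : q ^ N - 1 ≤ q * x := by
    by_cases hN0 : N = 0
    · rw [hN0, pow_zero, sub_self]; positivity
    · have : q ^ (N - 1) < x := not_le.1 (Nat.find_min hN (Nat.sub_one_lt hN0))
      rw [← Nat.sub_one_add_one hN0, pow_succ']
      nlinarith
  calc ∑' j : ℕ, (if q ^ j < x then ENNReal.ofReal (q ^ j) else 0)
      = ∑ j ∈ Finset.range N, (if q ^ j < x then ENNReal.ofReal (q ^ j) else 0) :=
        tsum_eq_sum hvanish
    _ ≤ ∑ j ∈ Finset.range N, ENNReal.ofReal (q ^ j) :=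
        Finset.sum_le_sum fun j _ => by split_ifs <;> simp
    _ = ENNReal.ofReal ((q ^ N - 1) / (q - 1)) := by
        rw [← ENNReal.ofReal_sum_of_nonneg fun j _ => by positivity, geom_sum_eq hq.ne']
    _ ≤ ENNReal.ofReal (q / (q - 1) * x) := by
        rw [div_mul_eq_mul_div]
        gcongr

theorem tsum_tail_pow_le (x : ℝ≥0∞) (J : ℕ) :
    ∑' j : {j : ℕ // J < j}, x ^ (j : ℕ) ≤ x ^ (J + 1) * (1 - x)⁻¹ := by
  have hinj : Function.Injective fun j : {j : ℕ // J < j} => j.1 - (J + 1) :=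
    fun i j h => Subtype.ext (by have := i.2; have := j.2; simp only at h; omega)
  calc ∑' j : {j : ℕ // J < j}, x ^ (j : ℕ)
      = ∑' j : {j : ℕ // J < j}, x ^ (J + 1) * x ^ (j.1 - (J + 1)) :=
        tsum_congr fun j => by rw [← pow_add, Nat.add_sub_cancel' j.2]
    _ = x ^ (J + 1) * ∑' j : {j : ℕ // J < j}, x ^ (j.1 - (J + 1)) := ENNReal.tsum_mul_left
    _ ≤ x ^ (J + 1) * ∑' i : ℕ, x ^ i := by
        gcongr
        exact ENNReal.tsum_comp_le_tsum_of_injective hinj (x ^ ·)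
    _ = x ^ (J + 1) * (1 - x)⁻¹ := by rw [ENNReal.tsum_geometric]

theorem tsum_comp_eq_ncard_smul {K M : Type*} [AddCommMonoid M] [TopologicalSpace M]
    {f : K → ℝ} {v : ℝ} (hf : ∀ k, f k = 0 ∨ f k = v) (hsupp : {k | f k ≠ 0}.ncard ≠ 0)
    (g : ℝ → M) (hg : g 0 = 0) :
    ∑' k, g (f k) = {k | f k ≠ 0}.ncard • g v := by
  have hfin := Set.finite_of_ncard_ne_zero hsupp
  rw [Set.ncard_eq_toFinset_card _ hfin, ← Finset.sum_const,
    tsum_eq_sum (s := hfin.toFinset) fun k hk => by simp_all]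
  exact Finset.sum_congr rfl fun k hk => by rw [(hf k).resolve_left (by simpa using hk)]

structure HasLevelProfile {K ι : Type*} (c : ℕ → K → ι → ℝ) (v : ℕ → ℝ) (n : ℕ → ℕ) : Prop where
  eq_zero_or_eq : ∀ j k ε, c j k ε = 0 ∨ c j k ε = v j
  ncard_support : ∀ j ε, {k | c j k ε ≠ 0}.ncard = n j
  ne_zero : ∀ j, n j ≠ 0

namespace HasLevelProfile

variable {K ι : Type*} {c : ℕ → K → ι → ℝ} {v : ℕ → ℝ} {n : ℕ → ℕ}

theorem tsum_sq_eq (h : HasLevelProfile c v n) (j : ℕ) (ε : ι) :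
    ∑' k, c j k ε ^ 2 = n j * v j ^ 2 := by
  rw [tsum_comp_eq_ncard_smul (h.eq_zero_or_eq j · ε) (h.ncard_support j ε ▸ h.ne_zero j)
    (· ^ 2) (zero_pow two_ne_zero), h.ncard_support, nsmul_eq_mul]

theorem tsum_tsum_comp_eq [Fintype ι] (h : HasLevelProfile c v n) (g : ℝ → ℝ≥0∞) (hg : g 0 = 0)
    (j : ℕ) : ∑' k, ∑' ε, g (c j k ε) = Fintype.card ι * (n j * g (v j)) := by
  rw [ENNReal.tsum_comm, tsum_fintype]
  simp_rw [tsum_comp_eq_ncard_smul (h.eq_zero_or_eq j · _)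
    (h.ncard_support j _ ▸ h.ne_zero j) g hg, h.ncard_support, nsmul_eq_mul]
  rw [Finset.sum_const, Finset.card_univ, nsmul_eq_mul]

theorem rpow_mul_tsum_count_le [Fintype ι] (h : HasLevelProfile c v n) {a r : ℝ} (ha : 1 < a)
    (hr : 0 < r) (hv : ∀ j, |v j| ≤ (a ^ j)⁻¹) (hn : ∀ j, (n j : ℝ) ≤ (a ^ r) ^ j)
    {lam : ℝ} (hlam : 0 < lam) :
    ENNReal.ofReal (lam ^ r) * ∑' (j : ℕ) (k : K) (ε : ι),
        (if lam < |c j k ε| then (1 : ℝ≥0∞) else 0) ≤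
      Fintype.card ι * ENNReal.ofReal (a ^ r / (a ^ r - 1)) := by
  have hlevel : ∀ j, (n j : ℝ≥0∞) * (if lam < |v j| then 1 else 0) ≤
      if (a ^ r) ^ j < (lam ^ r)⁻¹ then ENNReal.ofReal ((a ^ r) ^ j) else 0 := by
    intro j
    by_cases hj : lam < |v j|
    · have hpow : a ^ j < lam⁻¹ := (lt_inv_comm₀ hlam (by positivity)).1 (hj.trans_le (hv j))
      have hpow_r : (a ^ r) ^ j < (lam ^ r)⁻¹ := by
        rw [Real.rpow_pow_comm (by positivity), ← Real.inv_rpow hlam.le]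
        exact Real.rpow_lt_rpow (by positivity) hpow hr
      rw [if_pos hj, if_pos hpow_r, mul_one, ← ENNReal.ofReal_natCast]
      exact ENNReal.ofReal_le_ofReal (hn j)
    · simp [hj]
  have hq : 1 < a ^ r := Real.one_lt_rpow ha hr
  calc ENNReal.ofReal (lam ^ r) * ∑' (j : ℕ) (k : K) (ε : ι),
        (if lam < |c j k ε| then (1 : ℝ≥0∞) else 0)
      = ENNReal.ofReal (lam ^ r) * ∑' j, Fintype.card ι *
          ((n j : ℝ≥0∞) * (if lam < |v j| then 1 else 0)) := by
        congr 1
        exact tsum_congr (h.tsum_tsum_comp_eq (fun x => if lam < |x| then 1 else 0)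
          (by simp [hlam.le]))
    _ ≤ ENNReal.ofReal (lam ^ r) * ∑' j, Fintype.card ι *
          (if (a ^ r) ^ j < (lam ^ r)⁻¹ then ENNReal.ofReal ((a ^ r) ^ j) else 0) := by
        gcongr with j
        exact hlevel j
    _ = Fintype.card ι * (ENNReal.ofReal (lam ^ r) *
          ∑' j, (if (a ^ r) ^ j < (lam ^ r)⁻¹ then ENNReal.ofReal ((a ^ r) ^ j) else 0)) := by
        rw [ENNReal.tsum_mul_left]; ring
    _ ≤ Fintype.card ι * (ENNReal.ofReal (lam ^ r) *
          ENNReal.ofReal (a ^ r / (a ^ r - 1) * (lam ^ r)⁻¹)) := by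
        gcongr
        exact tsum_ite_pow_lt_le hq (by positivity)
    _ = Fintype.card ι * ENNReal.ofReal (a ^ r / (a ^ r - 1)) := by
        rw [← ENNReal.ofReal_mul (by positivity)]
        congr 2
        have : lam ^ r ≠ 0 := by positivity
        field_simp

theorem iSup_pow_mul_tsum_tail_sq_lt_top [Fintype ι] (h : HasLevelProfile c v n) {p ρ : ℝ}
    (hp : 0 ≤ p) (hρ0 : 0 ≤ ρ) (hρ1 : ρ < 1) (hpρ : p * ρ ≤ 1)
    (hn : ∀ j, n j * v j ^ 2 ≤ ρ ^ j) :
    (⨆ J : ℕ, ENNReal.ofReal (p ^ J) * ∑' (j : {j : ℕ // J < j}) (k : K) (ε : ι),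
        ENNReal.ofReal (c j.1 k ε ^ 2)) < ⊤ := by
  have hlevel : ∀ j, (n j : ℝ≥0∞) * ENNReal.ofReal (v j ^ 2) ≤ ENNReal.ofReal ρ ^ j := fun j => by
    rw [← ENNReal.ofReal_natCast, ← ENNReal.ofReal_mul (by positivity),
      ← ENNReal.ofReal_pow hρ0]
    exact ENNReal.ofReal_le_ofReal (hn j)
  have hfront : ∀ J, ENNReal.ofReal (p ^ J) * ENNReal.ofReal ρ ^ (J + 1) ≤ 1 := fun J => by
    rw [← ENNReal.ofReal_pow hρ0, ← ENNReal.ofReal_mul (by positivity), pow_succ, ← mul_assoc,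
      ← mul_pow]
    exact ENNReal.ofReal_le_one.2 (mul_le_one₀ (pow_le_one₀ (by positivity) hpρ) hρ0 hρ1.le)
  have hfinite : (Fintype.card ι : ℝ≥0∞) * (1 - ENNReal.ofReal ρ)⁻¹ < ⊤ :=
    ENNReal.mul_lt_top (by finiteness)
      (ENNReal.inv_lt_top.2 (tsub_pos_of_lt (ENNReal.ofReal_lt_one.2 hρ1)))
  refine lt_of_le_of_lt (iSup_le fun J => ?_) hfinite
  calc ENNReal.ofReal (p ^ J) * ∑' (j : {j : ℕ // J < j}) (k : K) (ε : ι),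
        ENNReal.ofReal (c j.1 k ε ^ 2)
      = ENNReal.ofReal (p ^ J) * ∑' j : {j : ℕ // J < j}, Fintype.card ι *
          ((n j : ℝ≥0∞) * ENNReal.ofReal (v j ^ 2)) := by
        congr 1
        exact tsum_congr fun j => h.tsum_tsum_comp_eq (fun x => ENNReal.ofReal (x ^ 2))
          (by simp) j
    _ ≤ ENNReal.ofReal (p ^ J) * ∑' j : {j : ℕ // J < j}, Fintype.card ι *
          ENNReal.ofReal ρ ^ (j : ℕ) := by
        gcongr with j
        exact hlevel j
    _ = Fintype.card ι * (ENNReal.ofReal (p ^ J) *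
          ∑' j : {j : ℕ // J < j}, ENNReal.ofReal ρ ^ (j : ℕ)) := by
        rw [ENNReal.tsum_mul_left]; ring
    _ ≤ Fintype.card ι * (ENNReal.ofReal (p ^ J) *
          (ENNReal.ofReal ρ ^ (J + 1) * (1 - ENNReal.ofReal ρ)⁻¹)) := by
        gcongr
        exact tsum_tail_pow_le _ J
    _ ≤ Fintype.card ι * (1 - ENNReal.ofReal ρ)⁻¹ := by
        rw [← mul_assoc (ENNReal.ofReal _)]
        gcongr
        exact mul_le_of_le_one_left zero_le (hfront J)

end HasLevelProfile

section GlobalCount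

variable {K ι : Type*} [Fintype ι] (c : ℕ → K → ι → ℝ) (d : ℕ)

theorem two_pow_le_tsum_global_count {j : ℕ} {lam : ℝ} {ε₀ : ι}
    (h : (2 : ℝ) ^ (d * j) * lam ^ 2 < ∑' k, c j k ε₀ ^ 2) :
    (2 : ℝ≥0∞) ^ (d * j) ≤ ∑' j' : ℕ, (2 : ℝ≥0∞) ^ (d * j') * ∑ ε : ι,
      (if (2 : ℝ) ^ (d * j') * lam ^ 2 < ∑' k, c j' k ε ^ 2 then (1 : ℝ≥0∞) else 0) :=
  calc (2 : ℝ≥0∞) ^ (d * j)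
      = (2 : ℝ≥0∞) ^ (d * j) *
          (if (2 : ℝ) ^ (d * j) * lam ^ 2 < ∑' k, c j k ε₀ ^ 2 then 1 else 0) := by
        rw [if_pos h, mul_one]
    _ ≤ (2 : ℝ≥0∞) ^ (d * j) * ∑ ε : ι,
          (if (2 : ℝ) ^ (d * j) * lam ^ 2 < ∑' k, c j k ε ^ 2 then 1 else 0) := by
        gcongr
        exact Finset.single_le_sum (f := fun ε : ι =>
          if (2 : ℝ) ^ (d * j) * lam ^ 2 < ∑' k, c j k ε ^ 2 then (1 : ℝ≥0∞) else 0)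
          (fun _ _ => zero_le) (Finset.mem_univ ε₀)
    _ ≤ _ := ENNReal.le_tsum j

theorem iSup_rpow_mul_tsum_global_count_eq_top {r κ m : ℝ} (hκ : 0 ≤ κ)
    (hm : 0 ≤ m) (hη : r * (κ + d) < 2 * d) (ε₀ : ι)
    (hE : ∀ j : ℕ, (2 : ℝ) ^ (-(κ * j) - m) ≤ ∑' k, c j k ε₀ ^ 2) :
    (⨆ lam ∈ Set.Ioc (0 : ℝ) 1, ENNReal.ofReal (lam ^ r) *
        ∑' j : ℕ, (2 : ℝ≥0∞) ^ (d * j) * ∑ ε : ι,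
          (if (2 : ℝ) ^ (d * j) * lam ^ 2 < ∑' k, c j k ε ^ 2
            then (1 : ℝ≥0∞) else 0)) = ⊤ := by
  refine ENNReal.eq_top_of_forall_nnreal_le fun M => ?_
  obtain ⟨j, hj⟩ := pow_unbounded_of_one_lt ((M : ℝ) * 2 ^ (r * (m + 1) / 2))
    (Real.one_lt_rpow one_lt_two (by linarith : 0 < d - r * (κ + d) / 2))
  -- `2^{dj} λ² = 2^{-κj - m - 1}` and `λ^r 2^{dj} = 2^{(d - r(κ + d)/2) j - r(m + 1)/2}`
  set lam : ℝ := 2 ^ (-(((κ + d) * j + m + 1) / 2))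
  have hlam : lam ∈ Set.Ioc (0 : ℝ) 1 :=
    ⟨by positivity, Real.rpow_le_one_of_one_le_of_nonpos one_le_two (by
      have : 0 ≤ (κ + d) * j := by positivity
      linarith)⟩
  have hdj : (2 : ℝ) ^ (d * j) = 2 ^ ((d : ℝ) * j) := by
    rw [← Real.rpow_natCast]; push_cast; rfl
  have hcount : (2 : ℝ) ^ (d * j) * lam ^ 2 < ∑' k, c j k ε₀ ^ 2 := by
    refine lt_of_lt_of_le ?_ (hE j)
    rw [hdj, ← Real.rpow_mul_natCast zero_le_two, ← Real.rpow_add two_pos]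
    exact Real.rpow_lt_rpow_of_exponent_lt one_lt_two (by push_cast; linarith)
  have hgrowth : (M : ℝ) < lam ^ r * 2 ^ (d * j) := by
    rw [← Real.rpow_mul_natCast zero_le_two, ← lt_div_iff₀ (by positivity),
      ← Real.rpow_sub two_pos] at hj
    rw [hdj, ← Real.rpow_mul zero_le_two, ← Real.rpow_add two_pos]
    refine hj.trans_eq (congrArg _ ?_)
    ring
  calc (M : ℝ≥0∞) ≤ ENNReal.ofReal (lam ^ r * 2 ^ (d * j)) := by
        rw [← ENNReal.ofReal_coe_nnreal]; exact ENNReal.ofReal_le_ofReal hgrowth.le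
    _ = ENNReal.ofReal (lam ^ r) * (2 : ℝ≥0∞) ^ (d * j) := by
        rw [ENNReal.ofReal_mul (by positivity), ENNReal.ofReal_pow zero_le_two,
          ENNReal.ofReal_ofNat]
    _ ≤ _ := le_trans (by gcongr; exact two_pow_le_tsum_global_count c d hcount)
        (le_iSup₂_of_le lam hlam le_rfl)

end GlobalCount

section Exponents

variable {d s α : ℝ}

theorem div_sub_two_mul_eq_neg_div (h : 2 * s + d ≠ 0) :
    2 * d * α / (2 * s + d) - 2 * α = -(4 * s * α / (2 * s + d)) := by
  field_simp; ring

theorem besov_exponent_add_nonpos (hd : 0 < d) (hs : 0 < s) (hα : d / 2 ≤ α) :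
    2 * (d * s / (2 * s + d)) + (2 * d * α / (2 * s + d) - 2 * α) ≤ 0 := by
  have hsd : 0 < 2 * s + d := by positivity
  rw [div_sub_two_mul_eq_neg_div hsd.ne', ← sub_eq_add_neg, sub_nonpos, ← mul_div_assoc,
    div_le_div_iff_of_pos_right hsd]
  nlinarith

theorem global_exponent_lt (hd : 0 < d) (hs : 0 < s) (hα : α < s + d / 2) :
    2 * d / (2 * s + d) * (2 * α - 2 * d * α / (2 * s + d) + d) < 2 * d := by
  have hsd : 0 < 2 * s + d := by positivity
  have : 4 * s * α / (2 * s + d) < 2 * s := by rw [div_lt_iff₀ hsd]; nlinarith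
  rw [← neg_sub, div_sub_two_mul_eq_neg_div hsd.ne', neg_neg, div_mul_eq_mul_div, div_lt_iff₀ hsd]
  nlinarith

end Exponents

theorem half_le_natFloor {x : ℝ} (hx : 1 ≤ x) : x / 2 ≤ ⌊x⌋₊ := by
  have h1 : (1 : ℝ) ≤ ⌊x⌋₊ := by exact_mod_cast Nat.one_le_floor_iff x |>.2 hx
  linarith [Nat.lt_floor_add_one x]

def coeff (d : ℕ) (α : ℝ) (j : ℕ) : ℝ := ((2 : ℝ) ^ d - 1)⁻¹ * (2 : ℝ) ^ (-(α * j))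

section Coeff

variable {d : ℕ} (α : ℝ) (j : ℕ)

theorem one_le_two_pow_sub_one (hd : 1 ≤ d) : (1 : ℝ) ≤ 2 ^ d - 1 := by
  linarith [pow_le_pow_right₀ (one_le_two : (1 : ℝ) ≤ 2) hd, pow_one (2 : ℝ)]

theorem coeff_pos (hd : 1 ≤ d) : 0 < coeff d α j := by
  have := one_le_two_pow_sub_one hd
  unfold coeff
  positivity

theorem coeff_le (hd : 1 ≤ d) : coeff d α j ≤ 2 ^ (-(α * j)) :=
  mul_le_of_le_one_left (by positivity) (inv_le_one_of_one_le₀ (one_le_two_pow_sub_one hd))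

theorem two_rpow_le_coeff (hd : 1 ≤ d) : (2 : ℝ) ^ (-(d : ℝ) - α * j) ≤ coeff d α j := by
  rw [sub_eq_add_neg, Real.rpow_add two_pos, Real.rpow_neg zero_le_two, Real.rpow_natCast]
  have := one_le_two_pow_sub_one hd
  exact mul_le_mul_of_nonneg_right (inv_anti₀ (by linarith) (by linarith)) (by positivity)

theorem abs_coeff_le_inv_pow (hd : 1 ≤ d) : |coeff d α j| ≤ (((2 : ℝ) ^ α) ^ j)⁻¹ := by
  rw [abs_of_pos (coeff_pos α j hd), ← Real.rpow_mul_natCast zero_le_two, ← Real.rpow_neg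
    zero_le_two]
  exact coeff_le α j hd

theorem natFloor_mul_coeff_sq_le (hd : 1 ≤ d) (β : ℝ) :
    ⌊(2 : ℝ) ^ (β * j)⌋₊ * coeff d α j ^ 2 ≤ ((2 : ℝ) ^ (β - 2 * α)) ^ j := by
  calc ⌊(2 : ℝ) ^ (β * j)⌋₊ * coeff d α j ^ 2
      ≤ (2 : ℝ) ^ (β * j) * ((2 : ℝ) ^ (-(α * j))) ^ 2 :=
        mul_le_mul (Nat.floor_le (by positivity))
          (pow_le_pow_left₀ (coeff_pos α j hd).le (coeff_le α j hd) 2) (by positivity)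
          (by positivity)
    _ = ((2 : ℝ) ^ (β - 2 * α)) ^ j := by
        rw [← Real.rpow_mul_natCast zero_le_two, ← Real.rpow_mul_natCast zero_le_two,
          ← Real.rpow_add two_pos]
        push_cast
        ring_nf

theorem two_rpow_le_natFloor_mul_coeff_sq (hd : 1 ≤ d) {β : ℝ} (hβ : 0 ≤ β) :
    (2 : ℝ) ^ (-((2 * α - β) * j) - (2 * d + 1)) ≤ ⌊(2 : ℝ) ^ (β * j)⌋₊ * coeff d α j ^ 2 := by
  calc (2 : ℝ) ^ (-((2 * α - β) * j) - (2 * d + 1))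
      = (2 : ℝ) ^ (β * j) / 2 * ((2 : ℝ) ^ (-(d : ℝ) - α * j)) ^ 2 := by
        rw [← Real.rpow_mul_natCast zero_le_two, div_eq_mul_inv, ← Real.rpow_neg_one,
          ← Real.rpow_add two_pos, ← Real.rpow_add two_pos]
        push_cast
        ring_nf
    _ ≤ ⌊(2 : ℝ) ^ (β * j)⌋₊ * coeff d α j ^ 2 := by
        gcongr
        · exact half_le_natFloor (Real.one_le_rpow one_le_two (by positivity))
        · exact two_rpow_le_coeff α j hd

end Coeff

end SparseArray

open SparseArray in
theorem sparse_array_local_not_global_general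
    (d : ℕ) (hd : 1 ≤ d) (s α : ℝ) (hs : 0 < s)
    (hα1 : (d : ℝ) / 2 ≤ α) (hα2 : α < s + d / 2)
    (c : ℕ → (Fin d → ℕ) → Sd d → ℝ)
    (hval : ∀ j k ε, c j k ε = 0 ∨
      c j k ε = ((2 : ℝ) ^ d - 1)⁻¹ * (2 : ℝ) ^ (-(α * j)))
    (hcard : ∀ j ε,
      Set.ncard {k | c j k ε ≠ 0} = ⌊(2 : ℝ) ^ (2 * d * α / (2 * s + d) * j)⌋₊) :
    ((⨆ lam ∈ Set.Ioc (0 : ℝ) 1, ENNReal.ofReal (lam ^ (2 * d / (2 * s + d))) *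
        ∑' (j : ℕ) (k : Fin d → ℕ) (ε : Sd d),
          (if lam < |c j k ε| then (1 : ℝ≥0∞) else 0)) < ⊤) ∧
    ((⨆ J : ℕ, ENNReal.ofReal ((2 : ℝ) ^ (2 * (J : ℝ) * (d * s / (2 * s + d)))) *
        ∑' (j : {j : ℕ // J < j}) (k : Fin d → ℕ) (ε : Sd d),
          ENNReal.ofReal ((c j.1 k ε) ^ 2)) < ⊤) ∧
    (⨆ lam ∈ Set.Ioc (0 : ℝ) 1, ENNReal.ofReal (lam ^ (2 * d / (2 * s + d))) *
        ∑' j : ℕ, (2 : ℝ≥0∞) ^ (d * j) * ∑ ε : Sd d,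
          (if (2 : ℝ) ^ (d * j) * lam ^ 2 < ∑' k : Fin d → ℕ, (c j k ε) ^ 2
            then (1 : ℝ≥0∞) else 0)) = ⊤ := by
  have hd0 : (0 : ℝ) < d := Nat.cast_pos.2 hd
  have hα : 0 < α := by linarith
  have hρ : 2 * d * α / (2 * s + d) - 2 * α < 0 := by
    rw [div_sub_two_mul_eq_neg_div (by positivity), neg_lt_zero]; positivity
  have hη := global_exponent_lt hd0 hs hα2
  set β := 2 * d * α / (2 * s + d) with hβ_def
  have h : HasLevelProfile c (coeff d α) (fun j => ⌊(2 : ℝ) ^ (β * j)⌋₊) :=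
    ⟨hval, hcard, fun j => (Nat.floor_pos.2 (Real.one_le_rpow one_le_two (by positivity))).ne'⟩
  refine ⟨?_, ?_, ?_⟩
  · have hαr : ((2 : ℝ) ^ α) ^ (2 * d / (2 * s + d)) = 2 ^ β := by
      rw [← Real.rpow_mul zero_le_two, hβ_def]; ring_nf
    refine lt_of_le_of_lt (iSup₂_le fun lam hlam => h.rpow_mul_tsum_count_le
      (Real.one_lt_rpow one_lt_two hα) (by positivity) (abs_coeff_le_inv_pow α · hd)
      (fun j => ?_) hlam.1) (by finiteness)
    rw [hαr, ← Real.rpow_mul_natCast zero_le_two]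
    exact Nat.floor_le (by positivity)
  · simp only [fun J : ℕ => show 2 * (J : ℝ) * (d * s / (2 * s + d)) = 2 * (d * s / (2 * s + d)) * J
      by ring, Real.rpow_mul_natCast zero_le_two]
    refine h.iSup_pow_mul_tsum_tail_sq_lt_top (by positivity) (by positivity)
      (Real.rpow_lt_one_of_one_lt_of_neg one_lt_two hρ) ?_ (natFloor_mul_coeff_sq_le α · hd β)
    rw [← Real.rpow_add two_pos]
    exact Real.rpow_le_one_of_one_le_of_nonpos one_le_two (besov_exponent_add_nonpos hd0 hs hα1)
  · obtain ⟨ε₀⟩ : Nonempty (Sd d) := ⟨⟨fun _ => true, fun h => by simpa using congrFun h ⟨0, hd⟩⟩⟩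
    refine iSup_rpow_mul_tsum_global_count_eq_top c d (m := 2 * d + 1) (by linarith)
      (by positivity) hη ε₀ fun j => ?_
    rw [h.tsum_sq_eq]
    exact two_rpow_le_natFloor_mul_coeff_sq α j hd (by positivity)

open SparseArray in
/-- a sparse coefficient array with, at each level `j` and sign `ε`,
exactly `⌊2^{(2dα/(2s+d))j}⌋` coefficients equal to `(2^d − 1)^{-1} 2^{-αj}` and the rest
equal to `0`, satisfies the defining conditions of `W_L(2d/(2s+d))` and of
`B^{ds/(2s+d)}_{2∞}`, but fails the defining condition of `W_G(2d/(2s+d))`. -/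
theorem sparse_array_local_not_global
    (d : ℕ) (hd : 1 ≤ d) (s α : ℝ) (hs : 0 < s)
    (hα1 : (d : ℝ) / 2 ≤ α) (hα2 : α < s + d / 2)
    (c : ℕ → (Fin d → ℕ) → Sd d → ℝ)
    (hrange : ∀ j k ε, c j k ε ≠ 0 → ∀ m, k m < 2 ^ j)
    (hval : ∀ j k ε, c j k ε = 0 ∨
      c j k ε = ((2 : ℝ) ^ d - 1)⁻¹ * (2 : ℝ) ^ (-(α * j)))
    (hcard : ∀ j ε,
      Set.ncard {k | c j k ε ≠ 0} = ⌊(2 : ℝ) ^ (2 * d * α / (2 * s + d) * j)⌋₊) :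
    ((⨆ lam ∈ Set.Ioc (0 : ℝ) 1, ENNReal.ofReal (lam ^ (2 * d / (2 * s + d))) *
        ∑' (j : ℕ) (k : Fin d → ℕ) (ε : Sd d),
          (if lam < |c j k ε| then (1 : ℝ≥0∞) else 0)) < ⊤) ∧
    ((⨆ J : ℕ, ENNReal.ofReal ((2 : ℝ) ^ (2 * (J : ℝ) * (d * s / (2 * s + d)))) *
        ∑' (j : {j : ℕ // J < j}) (k : Fin d → ℕ) (ε : Sd d),
          ENNReal.ofReal ((c j.1 k ε) ^ 2)) < ⊤) ∧
    (⨆ lam ∈ Set.Ioc (0 : ℝ) 1, ENNReal.ofReal (lam ^ (2 * d / (2 * s + d))) *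
        ∑' j : ℕ, (2 : ℝ≥0∞) ^ (d * j) * ∑ ε : Sd d,
          (if (2 : ℝ) ^ (d * j) * lam ^ 2 < ∑' k : Fin d → ℕ, (c j k ε) ^ 2
            then (1 : ℝ≥0∞) else 0)) = ⊤ :=
  sparse_array_local_not_global_general d hd s α hs hα1 hα2 c hval hcard
end
end

section
/- Let δ > 0. There exists a constant K₁ > 0 such that for every integer n with n log n ≥ 2 (δ^{-1} ∨ 1), every level j ∈ ℕ with 2^j ≤ (1/3) (2n / (δ log n))^{1/2}, every m ∈ {1,…,d}, every k ∈ ℤ^d and every ε ∈ S_d: P(N_j(m) > (L+3) n 2^{-j}) ≤ K₁ n^{-δ} and P(N_j > d (L+3) n 2^{-j}) ≤ K₁ n^{-δ}. -/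
open MeasureTheory ProbabilityTheory Real Set
open scoped ENNReal NNReal

noncomputable section

attribute [local instance] Classical.propDecidable

namespace CopulaEstimation

variable {Ω : Type} [MeasureSpace Ω]

/-- The sampling model: `X` is an i.i.d. sequence of `ℝ^d`-valued random vectors defined on a
probability space, with continuous marginal distribution functions `F_1, …, F_d`, such that the
law of `(F_1(X^1), …, F_d(X^d))` has density `c ∈ L²([0,1]^d)` (the copula density) with respect
to Lebesgue measure on `[0,1]^d`. -/
def IsCopulaModel {Ω : Type} [MeasureSpace Ω] (d : ℕ) (X : ℕ → Ω → Fin d → ℝ)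
    (F : Fin d → ℝ → ℝ) (c : (Fin d → ℝ) → ℝ) : Prop :=
  IsProbabilityMeasure (ℙ : Measure Ω) ∧
  (∀ i, Measurable (X i)) ∧
  (∀ i, Measure.map (X i) ℙ = Measure.map (X 0) ℙ) ∧
  iIndepFun X ℙ ∧
  (∀ m t, F m t = (ℙ {ω | X 0 ω m ≤ t}).toReal) ∧
  (∀ m, Continuous (F m)) ∧
  MemLp c 2 (volume.restrict (box d)) ∧
  (∀ x, x ∉ box d → c x = 0) ∧
  Measure.map (fun ω m => F m (X 0 ω m)) ℙ
    = (volume.restrict (box d)).withDensity fun x => ENNReal.ofReal (c x)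

/-- The rank `R_i^p` of `X_i^p` in the sample of size `n`. -/
def rnk {d : ℕ} (X : ℕ → Ω → Fin d → ℝ) (n i : ℕ) (ω : Ω) (p : Fin d) : ℕ :=
  ((Finset.range n).filter fun l => X l ω p < X i ω p).card

/-- Rank-based empirical scaling coefficient `c̃_{j,k}`. -/
def empS (φ : ℝ → ℝ) {d : ℕ} (X : ℕ → Ω → Fin d → ℝ) (n j : ℕ) (k : Fin d → ℤ)
    (ω : Ω) : ℝ :=
  (n : ℝ)⁻¹ * ∑ i ∈ Finset.range n, tensS φ j k fun p => (rnk X n i ω p : ℝ) / n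

/-- Rank-based empirical wavelet coefficient `c̃^ε_{j,k}`. -/
def empW (φ ψ : ℝ → ℝ) {d : ℕ} (X : ℕ → Ω → Fin d → ℝ) (n j : ℕ) (k : Fin d → ℤ)
    (ε : Fin d → Bool) (ω : Ω) : ℝ :=
  (n : ℝ)⁻¹ * ∑ i ∈ Finset.range n, tensW φ ψ j ε k fun p => (rnk X n i ω p : ℝ) / n

/-- Direct-observation empirical scaling coefficient `ĉ_{j,k}`. -/
def dirS (φ : ℝ → ℝ) {d : ℕ} (X : ℕ → Ω → Fin d → ℝ) (F : Fin d → ℝ → ℝ) (n j : ℕ)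
    (k : Fin d → ℤ) (ω : Ω) : ℝ :=
  (n : ℝ)⁻¹ * ∑ i ∈ Finset.range n, tensS φ j k fun p => F p (X i ω p)

/-- Direct-observation empirical wavelet coefficient `ĉ^ε_{j,k}`. -/
def dirW (φ ψ : ℝ → ℝ) {d : ℕ} (X : ℕ → Ω → Fin d → ℝ) (F : Fin d → ℝ → ℝ) (n j : ℕ)
    (k : Fin d → ℤ) (ε : Fin d → Bool) (ω : Ω) : ℝ :=
  (n : ℝ)⁻¹ * ∑ i ∈ Finset.range n, tensW φ ψ j ε k fun p => F p (X i ω p)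

/-- Generic linear wavelet reconstruction at level `j_n` from coefficients `aS`. -/
def estLin (φ : ℝ → ℝ) {d : ℕ} (aS : ℕ → (Fin d → ℤ) → Ω → ℝ) (jn : ℕ) (ω : Ω)
    (x : Fin d → ℝ) : ℝ :=
  ∑' k : Fin d → ℤ, aS jn k ω * tensS φ jn k x

/-- Generic hard local thresholding estimator built from coefficients `aS`, `aW`. -/
def estHLgen (φ ψ : ℝ → ℝ) {d : ℕ} (aS : ℕ → (Fin d → ℤ) → Ω → ℝ)
    (aW : ℕ → (Fin d → ℤ) → (Fin d → Bool) → Ω → ℝ) (jn Jn : ℕ) (lam : ℝ) (ω : Ω)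
    (x : Fin d → ℝ) : ℝ :=
  (∑' k : Fin d → ℤ, aS jn k ω * tensS φ jn k x)
    + ∑ j ∈ Finset.Icc jn Jn, ∑' k : Fin d → ℤ, ∑ ε : Sd d,
        (if lam < |aW j k ε.1 ω| then aW j k ε.1 ω else 0) * tensW φ ψ j ε.1 k x

/-- Generic hard global thresholding estimator built from coefficients `aS`, `aW`. -/
def estHGgen (φ ψ : ℝ → ℝ) {d : ℕ} (L : ℝ) (aS : ℕ → (Fin d → ℤ) → Ω → ℝ)
    (aW : ℕ → (Fin d → ℤ) → (Fin d → Bool) → Ω → ℝ) (jn Jn : ℕ) (lam : ℝ) (ω : Ω)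
    (x : Fin d → ℝ) : ℝ :=
  (∑' k : Fin d → ℤ, aS jn k ω * tensS φ jn k x)
    + ∑ j ∈ Finset.Icc jn Jn, ∑' k : Fin d → ℤ, ∑ ε : Sd d,
        (if L ^ d * 2 ^ (d * j) * lam ^ 2 < ∑' k' : Fin d → ℤ, (aW j k' ε.1 ω) ^ 2
          then aW j k ε.1 ω else 0) * tensW φ ψ j ε.1 k x

/-- Hard local thresholding estimator `c̃_HL` from the rank-based coefficients. -/
def estHL (φ ψ : ℝ → ℝ) {d : ℕ} (X : ℕ → Ω → Fin d → ℝ) (n jn Jn : ℕ) (lam : ℝ) :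
    Ω → (Fin d → ℝ) → ℝ :=
  estHLgen φ ψ (fun j k => empS φ X n j k) (fun j k ε => empW φ ψ X n j k ε) jn Jn lam

/-- Hard global thresholding estimator `c̃_HG` from the rank-based coefficients. -/
def estHG (φ ψ : ℝ → ℝ) {d : ℕ} (L : ℝ) (X : ℕ → Ω → Fin d → ℝ) (n jn Jn : ℕ)
    (lam : ℝ) : Ω → (Fin d → ℝ) → ℝ :=
  estHGgen φ ψ L (fun j k => empS φ X n j k) (fun j k ε => empW φ ψ X n j k ε) jn Jn lam

/-- Expected squared `L²([0,1]^d)` error `E‖est − c‖²` of an estimator. -/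
def risk {d : ℕ} (est : Ω → (Fin d → ℝ) → ℝ) (c : (Fin d → ℝ) → ℝ) : ℝ≥0∞ :=
  ∫⁻ ω, ∫⁻ x in box d, ENNReal.ofReal ((est ω x - c x) ^ 2) ∂volume ∂ℙ

/-- The tuning condition `2^{j_n − 1} < (log n)^{1/d} ≤ 2^{j_n}`. -/
def TuneJlo (d : ℕ) (jn : ℕ → ℕ) : Prop :=
  ∀ n : ℕ, 2 ≤ n →
    (2 : ℝ) ^ (jn n) < 2 * (Real.log n) ^ ((d : ℝ)⁻¹) ∧
    (Real.log n) ^ ((d : ℝ)⁻¹) ≤ (2 : ℝ) ^ (jn n)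

/-- The tuning condition `2^{J_n − 1} < (n / log n)^{1/d} ≤ 2^{J_n}`. -/
def TuneJhi (d : ℕ) (Jn : ℕ → ℕ) : Prop :=
  ∀ n : ℕ, 2 ≤ n →
    (2 : ℝ) ^ (Jn n) < 2 * ((n : ℝ) / Real.log n) ^ ((d : ℝ)⁻¹) ∧
    ((n : ℝ) / Real.log n) ^ ((d : ℝ)⁻¹) ≤ (2 : ℝ) ^ (Jn n)

/-- The threshold `λ_n = √(κ log n / n)`. -/
def thresh (κ : ℝ) (n : ℕ) : ℝ := Real.sqrt (κ * Real.log n / n)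

/-- The normalized rate factor `(n / log n)^{2s/(2s+d)}`. -/
def rateFactor (d : ℕ) (s : ℝ) (n : ℕ) : ℝ≥0∞ :=
  ENNReal.ofReal (((n : ℝ) / Real.log n) ^ (2 * s / (2 * s + d)))

end CopulaEstimation
namespace CopulaEstimation

/-- The (left-continuous) empirical distribution function of the `m`-th coordinates. -/
def edf {Ω : Type} {d : ℕ} (X : ℕ → Ω → Fin d → ℝ) (n : ℕ) (m : Fin d) (ω : Ω)
    (x : ℝ) : ℝ :=
  (((Finset.range n).filter fun l => X l ω m < x).card : ℝ) / n

/-- The count `N_j(m)` of sample points where `ψ_{j,k_m}` evaluated at the empirical and the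
true marginal distribution function differ. -/
def Ncount1 (ψ : ℝ → ℝ) {Ω : Type} {d : ℕ} (X : ℕ → Ω → Fin d → ℝ)
    (F : Fin d → ℝ → ℝ) (n j : ℕ) (k : Fin d → ℤ) (m : Fin d) (ω : Ω) : ℕ :=
  ((Finset.range n).filter fun i =>
    wsc ψ j (k m) (edf X n m ω (X i ω m)) ≠ wsc ψ j (k m) (F m (X i ω m))).card

/-- The count `N_j` of sample points where `ψ^ε_{j,k}` evaluated at the empirical and the
true marginal distribution functions differ. -/
def NcountD (φ ψ : ℝ → ℝ) {Ω : Type} {d : ℕ} (X : ℕ → Ω → Fin d → ℝ)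
    (F : Fin d → ℝ → ℝ) (n j : ℕ) (k : Fin d → ℤ) (ε : Fin d → Bool) (ω : Ω) : ℕ :=
  ((Finset.range n).filter fun i =>
    tensW φ ψ j ε k (fun p => edf X n p ω (X i ω p))
      ≠ tensW φ ψ j ε k fun p => F p (X i ω p)).card

end CopulaEstimation

/-!
The wavelet `ψ_{j,k_m}` vanishes outside `I = [a, b] = [k_m 2^{-j}, (k_m + L) 2^{-j}]`, so `N_j(m)`
is at most the number of `i` with `F̂_m(X_i^m) ∈ I` or `F_m(X_i^m) ∈ I`, and `N_j` is at most the
sum of these counts over the coordinates. The `U_i = F_m(X_i^m)` are i.i.d. uniform on `[0, 1]`.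
With `t = 2^{-j}`, by monotonicity of `F_m` a point with `F̂_m(X_i^m) ∈ I` but `U_i` farther than
`t` from `I` forces at least `n a` of the `U_l` below `a - t` or at least `n (1 - b)` of them above
`b + t`, although their expected numbers are at most `n (a - t)` and `n (1 - b - t)`. Outside these
two events every counted point has `U_i` in the `t`-neighbourhood of `I`, of probability at most
`(L + 2) t`. Hoeffding's inequality bounds each of the three events by `exp (-2 n t²)`, and the
constraint on `2^j` makes this at most `n^{-δ}`.
-/
open scoped Finset

namespace CopulaEstimation

section ContinuousCdf

variable {ν : Measure ℝ}

theorem exists_cdf_eq (hν : Continuous (cdf ν)) {z : ℝ} (hz₀ : 0 < z) (hz₁ : z < 1) :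
    ∃ s, cdf ν s = z :=
  mem_range_of_exists_le_of_exists_ge hν
    ((tendsto_cdf_atBot ν).eventually (eventually_le_nhds hz₀)).exists
    ((tendsto_cdf_atTop ν).eventually (eventually_ge_nhds hz₁)).exists

variable [IsProbabilityMeasure ν]

theorem measureReal_cdf_le_le (hν : Continuous (cdf ν)) {y : ℝ} (hy : 0 ≤ y) :
    ν.real {x | cdf ν x ≤ y} ≤ y := by
  refine le_of_forall_gt_imp_ge_of_dense fun z hyz => ?_
  rcases lt_or_ge z 1 with hz₁ | hz₁
  · obtain ⟨s, hs⟩ := exists_cdf_eq hν (hy.trans_lt hyz) hz₁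
    have hsub : {x | cdf ν x ≤ y} ⊆ Iic s := fun x hx =>
      le_of_not_gt fun hsx => (hx.trans_lt (hs ▸ hyz)).not_ge (monotone_cdf ν hsx.le)
    calc ν.real {x | cdf ν x ≤ y} ≤ ν.real (Iic s) := measureReal_mono hsub
      _ = z := by rw [← cdf_eq_real, hs]
  · exact measureReal_le_one.trans hz₁

theorem le_measureReal_cdf_lt (hν : Continuous (cdf ν)) {y : ℝ} (hy : y ≤ 1) :
    y ≤ ν.real {x | cdf ν x < y} := by
  refine le_of_forall_lt_imp_le_of_dense fun z hzy => ?_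
  rcases le_or_gt z 0 with hz₀ | hz₀
  · exact hz₀.trans measureReal_nonneg
  · obtain ⟨s, hs⟩ := exists_cdf_eq hν hz₀ (hzy.trans_le hy)
    have hsub : Iic s ⊆ {x | cdf ν x < y} := fun x hx =>
      ((monotone_cdf ν hx).trans_eq hs).trans_lt hzy
    calc z = ν.real (Iic s) := by rw [← cdf_eq_real, hs]
      _ ≤ ν.real {x | cdf ν x < y} := measureReal_mono hsub

theorem measureReal_cdf_lt_le (hν : Continuous (cdf ν)) {y : ℝ} (hy : 0 ≤ y) :
    ν.real {x | cdf ν x < y} ≤ y :=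
  (measureReal_mono fun _ (hx : cdf ν _ < y) => hx.le).trans (measureReal_cdf_le_le hν hy)

theorem measureReal_le_cdf_le (hν : Continuous (cdf ν)) {y : ℝ} (hy : y ≤ 1) :
    ν.real {x | y ≤ cdf ν x} ≤ 1 - y := by
  have hcompl := probReal_compl_eq_one_sub (μ := ν)
    (measurableSet_lt (monotone_cdf ν).measurable (measurable_const (a := y)))
  simp only [compl_ofPred, not_lt] at hcompl
  linarith [le_measureReal_cdf_lt hν hy]

theorem measureReal_cdf_mem_Icc_le (hν : Continuous (cdf ν)) {a b : ℝ} (hab : a ≤ b) :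
    ν.real {x | cdf ν x ∈ Icc a b} ≤ b - a := by
  by_cases hempty : {x | cdf ν x ∈ Icc a b} = ∅
  · rw [hempty, measureReal_empty]
    linarith
  obtain ⟨x₀, hx₀a, hx₀b⟩ := nonempty_iff_ne_empty.mpr hempty
  have hdiff : {x | cdf ν x ∈ Icc a b} = {x | cdf ν x ≤ b} \ {x | cdf ν x < a} := by
    ext x; simp [and_comm]
  have hsub : {x | cdf ν x < a} ⊆ {x | cdf ν x ≤ b} := fun x hx => le_trans (le_of_lt hx) hab
  rw [hdiff, measureReal_sdiff hsub
    (measurableSet_lt (monotone_cdf ν).measurable measurable_const)]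
  linarith [measureReal_cdf_le_le hν ((cdf_nonneg ν x₀).trans hx₀b),
    le_measureReal_cdf_lt hν (hx₀a.trans (cdf_le_one ν x₀))]

end ContinuousCdf

/-- Hoeffding's inequality. The decidability instance is a parameter so that the lemma applies to
filters over `Icc`, `Ici`, `Iio` as elaborated with their own instances. -/
theorem measureReal_le_card_filter_le {Ω β : Type*} [MeasurableSpace Ω] [MeasurableSpace β]
    {μ : Measure Ω} [IsProbabilityMeasure μ] {V : ℕ → Ω → β} (hV : ∀ i, Measurable (V i))
    (hindep : iIndepFun V μ) {S : Set β} [DecidablePred (· ∈ S)] (hS : MeasurableSet S)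
    {n : ℕ} {q t : ℝ} (hq : ∀ i < n, μ.real (V i ⁻¹' S) ≤ q) (ht : 0 ≤ t) :
    μ.real {ω | n * (q + t) ≤ #{i ∈ Finset.range n | V i ω ∈ S}} ≤ exp (-2 * n * t ^ 2) := by
  set p : ℕ → ℝ := fun i => μ.real (V i ⁻¹' S)
  set Y : ℕ → Ω → ℝ := fun i ω => S.indicator 1 (V i ω) - p i
  have hY : iIndepFun Y μ := hindep.comp (fun i b => S.indicator 1 b - p i) fun _ =>
    (measurable_one.indicator hS).sub_const _
  have hsubG : ∀ i < n, HasSubgaussianMGF (Y i) ((‖(1 : ℝ) - 0‖₊ / 2) ^ 2) μ := by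
    intro i _
    have hmean : μ[fun ω => S.indicator (1 : β → ℝ) (V i ω)] = p i := by
      simp_rw [← indicator_comp_right (g := (1 : β → ℝ)) (V i)]
      exact integral_indicator_one (hV i hS)
    have hbdd : ∀ ω, S.indicator (1 : β → ℝ) (V i ω) ∈ Icc 0 1 := fun ω => by
      by_cases h : V i ω ∈ S <;> simp [h]
    simpa [hmean] using hasSubgaussianMGF_of_mem_Icc
      ((measurable_one.indicator hS).comp (hV i)).aemeasurable (ae_of_all μ hbdd)
  have hsub : {ω | n * (q + t) ≤ #{i ∈ Finset.range n | V i ω ∈ S}} ⊆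
      {ω | n * t ≤ ∑ i ∈ Finset.range n, Y i ω} := by
    intro ω hω
    simp only [mem_ofPred_eq, Y, Finset.sum_sub_distrib] at hω ⊢
    have hcount : ∑ i ∈ Finset.range n, S.indicator (1 : β → ℝ) (V i ω)
        = #{i ∈ Finset.range n | V i ω ∈ S} := by
      rw [Finset.natCast_card_filter]
      simp [indicator_apply]
    have hp : ∑ i ∈ Finset.range n, p i ≤ n * q := by
      simpa using Finset.sum_le_sum fun i hi => hq i (Finset.mem_range.mp hi)
    nlinarith
  calc μ.real {ω | n * (q + t) ≤ #{i ∈ Finset.range n | V i ω ∈ S}}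
      ≤ μ.real {ω | n * t ≤ ∑ i ∈ Finset.range n, Y i ω} := measureReal_mono hsub
    _ ≤ exp (-(n * t) ^ 2 / (2 * n * ((‖(1 : ℝ) - 0‖₊ / 2) ^ 2 : ℝ≥0))) :=
      HasSubgaussianMGF.measure_sum_range_ge_le_of_iIndepFun hY hsubG (by positivity)
    _ = exp (-2 * n * t ^ 2) := by
      rcases Nat.eq_zero_or_pos n with rfl | hn
      · simp
      · congr 1
        push_cast
        field_simp
        norm_num

section Ranks

variable {G : ℝ → ℝ} {n : ℕ} {z : ℕ → ℝ} {x c : ℝ}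

theorem card_lt_le_card_comp_lt (hG : Monotone G) (hx : G x < c) :
    #{l ∈ Finset.range n | z l < x} ≤ #{l ∈ Finset.range n | G (z l) < c} :=
  Finset.card_le_card <| Finset.monotone_filter_right _ fun _ _ hl => (hG hl.le).trans_lt hx

theorem card_comp_lt_le_card_lt (hG : Monotone G) (hx : c < G x) :
    #{l ∈ Finset.range n | G (z l) < c} ≤ #{l ∈ Finset.range n | z l < x} :=
  Finset.card_le_card <| Finset.monotone_filter_right _ fun _ _ hl =>
    lt_of_not_ge fun hxl => (hl.trans hx).not_ge (hG hxl)

theorem apply_mem_Icc_or_of_rank_mem_Icc (hG : Monotone G) (hG₀ : ∀ x, 0 ≤ G x)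
    (hG₁ : ∀ x, G x ≤ 1) (hn : 0 < n) {a b : ℝ} (t : ℝ)
    (hx : (#{l ∈ Finset.range n | z l < x} : ℝ) / n ∈ Icc a b) :
    G x ∈ Icc (a - t) (b + t) ∨
      (b + t ≤ 1 ∧ n * (1 - (b + t) + t) ≤ #{l ∈ Finset.range n | G (z l) ∈ Ici (b + t)}) ∨
      (0 ≤ a - t ∧ n * (a - t + t) ≤ #{l ∈ Finset.range n | G (z l) ∈ Iio (a - t)}) := by
  rw [mem_Icc, le_div_iff₀ (by positivity), div_le_iff₀ (by positivity)] at hx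
  by_cases hlo : G x < a - t
  · have hcard : (#{l ∈ Finset.range n | z l < x} : ℝ)
        ≤ #{l ∈ Finset.range n | G (z l) < a - t} := mod_cast card_lt_le_card_comp_lt hG hlo
    exact Or.inr (Or.inr ⟨(hG₀ x).trans hlo.le, by simp only [mem_Iio]; linarith⟩)
  by_cases hhi : b + t < G x
  · have hcard : (#{l ∈ Finset.range n | G (z l) < b + t} : ℝ)
        ≤ #{l ∈ Finset.range n | z l < x} := mod_cast card_comp_lt_le_card_lt hG hhi
    have hsplit := Finset.card_filter_add_card_filter_not (s := Finset.range n)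
      (fun l => b + t ≤ G (z l))
    simp only [not_le, Finset.card_range] at hsplit
    have hsplit' : (#{l ∈ Finset.range n | b + t ≤ G (z l)} : ℝ)
        + #{l ∈ Finset.range n | G (z l) < b + t} = n := mod_cast hsplit
    exact Or.inr (Or.inl ⟨hhi.le.trans (hG₁ x), by simp only [mem_Ici]; linarith⟩)
  exact Or.inl ⟨not_lt.mp hlo, not_lt.mp hhi⟩

theorem card_apply_mem_Icc_or_of_lt_card (hG : Monotone G) (hG₀ : ∀ x, 0 ≤ G x)
    (hG₁ : ∀ x, G x ≤ 1) {a b t : ℝ} (ht : 0 ≤ t)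
    (h : n * (b - a + 3 * t) < #{i ∈ Finset.range n |
      (#{l ∈ Finset.range n | z l < z i} : ℝ) / n ∈ Icc a b ∨ G (z i) ∈ Icc a b}) :
    n * (b - a + 2 * t + t) ≤ #{i ∈ Finset.range n | G (z i) ∈ Icc (a - t) (b + t)} ∨
      (b + t ≤ 1 ∧ n * (1 - (b + t) + t) ≤ #{l ∈ Finset.range n | G (z l) ∈ Ici (b + t)}) ∨
      (0 ≤ a - t ∧ n * (a - t + t) ≤ #{l ∈ Finset.range n | G (z l) ∈ Iio (a - t)}) := by
  have hn : 0 < n := Nat.pos_of_ne_zero (by rintro rfl; simp at h)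
  refine or_iff_not_imp_right.mpr fun hfar => ?_
  have hsub : {i ∈ Finset.range n | (#{l ∈ Finset.range n | z l < z i} : ℝ) / n ∈ Icc a b ∨
      G (z i) ∈ Icc a b} ⊆ {i ∈ Finset.range n | G (z i) ∈ Icc (a - t) (b + t)} :=
    Finset.monotone_filter_right _ fun i _ hi => hi.elim
      (fun hrank => (apply_mem_Icc_or_of_rank_mem_Icc hG hG₀ hG₁ hn t hrank).resolve_right hfar)
      fun hG => ⟨by linarith [hG.1], by linarith [hG.2]⟩
  have hcard : (#{i ∈ Finset.range n | (#{l ∈ Finset.range n | z l < z i} : ℝ) / n ∈ Icc a b ∨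
      G (z i) ∈ Icc a b} : ℝ) ≤ #{i ∈ Finset.range n | G (z i) ∈ Icc (a - t) (b + t)} :=
    mod_cast Finset.card_le_card hsub
  linarith

end Ranks

theorem measureReal_card_empirical_or_cdf_mem_Icc_gt_le {Ω : Type*} [MeasurableSpace Ω]
    {μ : Measure Ω} [IsProbabilityMeasure μ] {Z : ℕ → Ω → ℝ} (hZ : ∀ i, Measurable (Z i))
    (hindep : iIndepFun Z μ) (hid : ∀ i, μ.map (Z i) = μ.map (Z 0))
    (hcont : Continuous (cdf (μ.map (Z 0)))) (n : ℕ) {a b t : ℝ} (hab : a ≤ b) (ht : 0 ≤ t) :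
    μ.real {ω | n * (b - a + 3 * t) < #{i ∈ Finset.range n |
      (#{l ∈ Finset.range n | Z l ω < Z i ω} : ℝ) / n ∈ Icc a b ∨
        cdf (μ.map (Z 0)) (Z i ω) ∈ Icc a b}} ≤ 3 * exp (-2 * n * t ^ 2) := by
  set ν := μ.map (Z 0)
  have : IsProbabilityMeasure ν := Measure.isProbabilityMeasure_map (hZ 0).aemeasurable
  set G := cdf ν
  have hGm : Measurable G := (monotone_cdf ν).measurable
  have hoeffding : ∀ (S : Set ℝ) [DecidablePred (· ∈ S)] {q : ℝ}, MeasurableSet S →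
      ν.real (G ⁻¹' S) ≤ q →
      μ.real {ω | n * (q + t) ≤ #{i ∈ Finset.range n | G (Z i ω) ∈ S}} ≤ exp (-2 * n * t ^ 2) := by
    intro S _ q hS hq
    refine measureReal_le_card_filter_le (V := fun i ω => G (Z i ω)) (fun i => hGm.comp (hZ i))
      (hindep.comp (fun _ => G) fun _ => hGm) hS (fun i _ => ?_) ht
    have hlaw := map_measureReal_apply (μ := μ) (hZ i) (hGm hS)
    rw [hid i] at hlaw
    exact hlaw ▸ hq
  have hnear : μ.real {ω | n * (b - a + 2 * t + t) ≤
      #{i ∈ Finset.range n | G (Z i ω) ∈ Icc (a - t) (b + t)}} ≤ exp (-2 * n * t ^ 2) := by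
    have hI : ν.real (G ⁻¹' Icc (a - t) (b + t)) ≤ b - a + 2 * t := by
      have := measureReal_cdf_mem_Icc_le hcont (ν := ν) (a := a - t) (b := b + t) (by linarith)
      rwa [show b + t - (a - t) = b - a + 2 * t by ring] at this
    exact hoeffding (Icc (a - t) (b + t)) measurableSet_Icc hI
  have hright : μ.real {ω | b + t ≤ 1 ∧ n * (1 - (b + t) + t) ≤
      #{l ∈ Finset.range n | G (Z l ω) ∈ Ici (b + t)}} ≤ exp (-2 * n * t ^ 2) := by
    by_cases hbt : b + t ≤ 1
    · exact (measureReal_mono fun ω hω => hω.2).trans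
        (hoeffding (Ici (b + t)) measurableSet_Ici (measureReal_le_cdf_le hcont hbt))
    · simp [hbt, (exp_pos _).le]
  have hleft : μ.real {ω | 0 ≤ a - t ∧ n * (a - t + t) ≤
      #{l ∈ Finset.range n | G (Z l ω) ∈ Iio (a - t)}} ≤ exp (-2 * n * t ^ 2) := by
    by_cases hat : 0 ≤ a - t
    · exact (measureReal_mono fun ω hω => hω.2).trans
        (hoeffding (Iio (a - t)) measurableSet_Iio (measureReal_cdf_lt_le hcont hat))
    · simp [hat, (exp_pos _).le]
  calc _ ≤ μ.real ({ω | n * (b - a + 2 * t + t) ≤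
          #{i ∈ Finset.range n | G (Z i ω) ∈ Icc (a - t) (b + t)}} ∪
        {ω | b + t ≤ 1 ∧ n * (1 - (b + t) + t) ≤
          #{l ∈ Finset.range n | G (Z l ω) ∈ Ici (b + t)}} ∪
        {ω | 0 ≤ a - t ∧ n * (a - t + t) ≤
          #{l ∈ Finset.range n | G (Z l ω) ∈ Iio (a - t)}}) := by
        refine measureReal_mono fun ω hω => ?_
        rcases card_apply_mem_Icc_or_of_lt_card (monotone_cdf ν) (cdf_nonneg ν) (cdf_le_one ν)
          ht hω with h | h | h
        exacts [Or.inl (Or.inl h), Or.inl (Or.inr h), Or.inr h]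
    _ ≤ _ := (measureReal_union_le _ _).trans (add_le_add (measureReal_union_le _ _) le_rfl)
    _ ≤ 3 * exp (-2 * n * t ^ 2) := by linarith

section Wavelets

variable {L : ℝ} {h φ ψ : ℝ → ℝ} {j : ℕ}

abbrev supportIcc (L : ℝ) (j : ℕ) (κ : ℤ) : Set ℝ := Icc (κ / 2 ^ j) ((κ + L) / 2 ^ j)

theorem wsc_eq_zero_of_notMem (hh : ∀ x, x ∉ Icc 0 L → h x = 0) {κ : ℤ} {x : ℝ}
    (hx : x ∉ supportIcc L j κ) : wsc h j κ x = 0 := by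
  have h2j : (0 : ℝ) < 2 ^ j := by positivity
  have hout : (2 : ℝ) ^ j * x - κ ∉ Icc 0 L := fun ⟨h₀, hL⟩ =>
    hx ⟨by rw [div_le_iff₀ h2j]; linarith, by rw [le_div_iff₀ h2j]; linarith⟩
  rw [wsc, hh _ hout, mul_zero]

theorem mem_supportIcc_or_of_wsc_ne (hh : ∀ x, x ∉ Icc 0 L → h x = 0) {κ : ℤ} {x y : ℝ}
    (hne : wsc h j κ x ≠ wsc h j κ y) : x ∈ supportIcc L j κ ∨ y ∈ supportIcc L j κ := by
  by_contra! hxy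
  exact hne (by rw [wsc_eq_zero_of_notMem hh hxy.1, wsc_eq_zero_of_notMem hh hxy.2])

theorem exists_mem_supportIcc_of_tensW_ne (hφ : ∀ x, x ∉ Icc 0 L → φ x = 0)
    (hψ : ∀ x, x ∉ Icc 0 L → ψ x = 0) {d : ℕ} {ε : Fin d → Bool} {k : Fin d → ℤ}
    {x y : Fin d → ℝ} (hne : tensW φ ψ j ε k x ≠ tensW φ ψ j ε k y) :
    ∃ p, x p ∈ supportIcc L j (k p) ∨ y p ∈ supportIcc L j (k p) := by
  by_contra! hxy
  refine hne (Finset.prod_congr rfl fun p _ => ?_)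
  by_contra hp
  obtain ⟨hx, hy⟩ := hxy p
  split_ifs at hp
  exacts [(mem_supportIcc_or_of_wsc_ne hψ hp).elim hx hy,
    (mem_supportIcc_or_of_wsc_ne hφ hp).elim hx hy]

end Wavelets

section Counts

variable {Ω : Type} {d : ℕ} (L : ℝ) (X : ℕ → Ω → Fin d → ℝ) (F : Fin d → ℝ → ℝ) (n j : ℕ)
  (k : Fin d → ℤ)

def windowCount (p : Fin d) (ω : Ω) : ℕ :=
  #{i ∈ Finset.range n |
    edf X n p ω (X i ω p) ∈ supportIcc L j (k p) ∨ F p (X i ω p) ∈ supportIcc L j (k p)}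

variable {L} {φ ψ : ℝ → ℝ}

theorem Ncount1_le_windowCount (hψ : ∀ x, x ∉ Icc 0 L → ψ x = 0) (m : Fin d) (ω : Ω) :
    Ncount1 ψ X F n j k m ω ≤ windowCount L X F n j k m ω :=
  Finset.card_le_card <| Finset.monotone_filter_right _ fun _ _ =>
    mem_supportIcc_or_of_wsc_ne hψ

theorem NcountD_le_sum_windowCount (hφ : ∀ x, x ∉ Icc 0 L → φ x = 0)
    (hψ : ∀ x, x ∉ Icc 0 L → ψ x = 0) (ε : Fin d → Bool) (ω : Ω) :
    NcountD φ ψ X F n j k ε ω ≤ ∑ p, windowCount L X F n j k p ω := by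
  refine (Finset.card_le_card fun i hi => ?_).trans Finset.card_biUnion_le
  obtain ⟨hi, hne⟩ := Finset.mem_filter.mp hi
  obtain ⟨p, hp⟩ := exists_mem_supportIcc_of_tensW_ne hφ hψ hne
  exact Finset.mem_biUnion.mpr ⟨p, Finset.mem_univ p, Finset.mem_filter.mpr ⟨hi, hp⟩⟩

variable [MeasureSpace Ω] [IsFiniteMeasure (ℙ : Measure Ω)]

theorem measureReal_Ncount1_gt_le_windowCount (hψ : ∀ x, x ∉ Icc 0 L → ψ x = 0) (m : Fin d)
    (θ : ℝ) :
    (ℙ : Measure Ω).real {ω | θ < Ncount1 ψ X F n j k m ω}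
      ≤ (ℙ : Measure Ω).real {ω | θ < windowCount L X F n j k m ω} := by
  refine measureReal_mono fun ω hω => ?_
  simp only [mem_ofPred_eq] at hω ⊢
  exact hω.trans_le (mod_cast Ncount1_le_windowCount X F n j k hψ m ω)

theorem measureReal_NcountD_gt_le_sum_windowCount (hφ : ∀ x, x ∉ Icc 0 L → φ x = 0)
    (hψ : ∀ x, x ∉ Icc 0 L → ψ x = 0) (ε : Fin d → Bool) (θ : ℝ) :
    (ℙ : Measure Ω).real {ω | d * θ < NcountD φ ψ X F n j k ε ω}
      ≤ ∑ p, (ℙ : Measure Ω).real {ω | θ < windowCount L X F n j k p ω} := by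
  refine (measureReal_mono fun ω hω => mem_iUnion.mpr ?_).trans (measureReal_iUnion_fintype_le _)
  simp only [mem_ofPred_eq] at hω
  have hsum : ∑ _p : Fin d, θ < ∑ p, (windowCount L X F n j k p ω : ℝ) := by
    rw [Finset.sum_const, Finset.card_univ, Fintype.card_fin, nsmul_eq_mul]
    exact hω.trans_le (mod_cast NcountD_le_sum_windowCount X F n j k hφ hψ ε ω)
  obtain ⟨p, -, hp⟩ := Finset.exists_lt_of_sum_lt hsum
  exact ⟨p, hp⟩

end Counts

theorem coe_cdf_map_eq {Ω : Type*} [MeasurableSpace Ω] {μ : Measure Ω} [IsProbabilityMeasure μ]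
    {Z : Ω → ℝ} (hZ : Measurable Z) {G : ℝ → ℝ} (hG : ∀ t, G t = (μ {ω | Z ω ≤ t}).toReal) :
    ⇑(cdf (μ.map Z)) = G := by
  have : IsProbabilityMeasure (μ.map Z) := Measure.isProbabilityMeasure_map hZ.aemeasurable
  ext t
  rw [cdf_eq_real, map_measureReal_apply hZ measurableSet_Iic, hG]
  rfl

theorem measureReal_card_edf_or_marginal_mem_Icc_gt_le {Ω : Type} [MeasureSpace Ω]
    [IsProbabilityMeasure (ℙ : Measure Ω)] {d : ℕ} {X : ℕ → Ω → Fin d → ℝ}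
    (hmeas : ∀ i, Measurable (X i)) (hid : ∀ i, Measure.map (X i) ℙ = Measure.map (X 0) ℙ)
    (hindep : iIndepFun X ℙ) {F : Fin d → ℝ → ℝ}
    (hF : ∀ m t, F m t = (ℙ {ω | X 0 ω m ≤ t}).toReal) (hFc : ∀ m, Continuous (F m))
    (m : Fin d) (n : ℕ) {a b t : ℝ} (hab : a ≤ b) (ht : 0 ≤ t) :
    (ℙ : Measure Ω).real {ω | n * (b - a + 3 * t) < #{i ∈ Finset.range n |
      edf X n m ω (X i ω m) ∈ Icc a b ∨ F m (X i ω m) ∈ Icc a b}} ≤ 3 * exp (-2 * n * t ^ 2) := by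
  have hZ : ∀ i, Measurable fun ω => X i ω m := fun i => (measurable_pi_apply m).comp (hmeas i)
  have hcdf := coe_cdf_map_eq (hZ 0) (hF m)
  rw [← hcdf]
  refine measureReal_card_empirical_or_cdf_mem_Icc_gt_le hZ
    (hindep.comp (fun _ v => v m) fun _ => measurable_pi_apply m) (fun i => ?_) (hcdf ▸ hFc m)
    n hab ht
  have hmap := congrArg (Measure.map fun v : Fin d → ℝ => v m) (hid i)
  rwa [Measure.map_map (measurable_pi_apply m) (hmeas i),
    Measure.map_map (measurable_pi_apply m) (hmeas 0)] at hmap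

theorem exp_neg_two_mul_le_rpow_neg {n : ℕ} (hn : 1 < n) {δ : ℝ} (hδ : 0 < δ) {j : ℕ}
    (hj : (2 : ℝ) ^ j ≤ 1 / 3 * √(2 * n / (δ * log n))) :
    exp (-2 * n * ((2 : ℝ) ^ j)⁻¹ ^ 2) ≤ n ^ (-δ) := by
  have hn₀ : (0 : ℝ) < n := by positivity
  have hlog : 0 < log n := log_pos (by exact_mod_cast hn)
  have h2j : (0 : ℝ) < 2 ^ j := by positivity
  have hsq : (3 * 2 ^ j) ^ 2 ≤ 2 * n / (δ * log n) := by
    have := pow_le_pow_left₀ (by positivity) (show 3 * (2 : ℝ) ^ j ≤ √(2 * n / (δ * log n)) by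
      linarith) 2
    rwa [sq_sqrt (by positivity)] at this
  rw [le_div_iff₀ (by positivity)] at hsq
  have hlevel : δ * log n ≤ 2 * n * ((2 : ℝ) ^ j)⁻¹ ^ 2 := by
    rw [inv_pow, ← div_eq_mul_inv, le_div_iff₀ (by positivity)]
    nlinarith
  rw [rpow_def_of_pos hn₀, exp_le_exp]
  linarith

theorem measureReal_windowCount_gt_le {Ω : Type} [MeasureSpace Ω]
    [IsProbabilityMeasure (ℙ : Measure Ω)] {d : ℕ} {X : ℕ → Ω → Fin d → ℝ}
    (hmeas : ∀ i, Measurable (X i)) (hid : ∀ i, Measure.map (X i) ℙ = Measure.map (X 0) ℙ)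
    (hindep : iIndepFun X ℙ) {F : Fin d → ℝ → ℝ}
    (hF : ∀ m t, F m t = (ℙ {ω | X 0 ω m ≤ t}).toReal) (hFc : ∀ m, Continuous (F m))
    {L : ℝ} (hL : 0 ≤ L) {n : ℕ} (hn : 1 < n) {δ : ℝ} (hδ : 0 < δ) {j : ℕ}
    (hj : (2 : ℝ) ^ j ≤ 1 / 3 * √(2 * n / (δ * log n))) (k : Fin d → ℤ) (p : Fin d) :
    (ℙ : Measure Ω).real {ω | (L + 3) * n * (2 : ℝ) ^ (-(j : ℝ)) < windowCount L X F n j k p ω}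
      ≤ 3 * n ^ (-δ) := by
  have hθ : (L + 3) * n * (2 : ℝ) ^ (-(j : ℝ))
      = n * ((k p + L) / 2 ^ j - k p / 2 ^ j + 3 * ((2 : ℝ) ^ j)⁻¹) := by
    rw [rpow_neg zero_le_two, rpow_natCast]; ring
  rw [hθ]
  exact (measureReal_card_edf_or_marginal_mem_Icc_gt_le hmeas hid hindep hF hFc p n
    (by gcongr; linarith) (by positivity)).trans
    (by gcongr; exact exp_neg_two_mul_le_rpow_neg hn hδ hj)

end CopulaEstimation

open CopulaEstimation in
/-- Lemma `triboulnix`: with high probability, at most of order `n 2^{-j}`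
sample points are affected by replacing the true marginal distribution functions by the
empirical ones inside a wavelet at level `j`. -/
theorem count_of_perturbed_points
    (d : ℕ) (hd : 2 ≤ d) (L : ℝ) (hL : 1 ≤ L) (φ ψ : ℝ → ℝ)
    (hwav : IsWaveletBasis d L φ ψ)
    (Ω : Type) [MeasureSpace Ω] [IsProbabilityMeasure (ℙ : Measure Ω)]
    (X : ℕ → Ω → Fin d → ℝ) (hmeas : ∀ i, Measurable (X i))
    (hid : ∀ i, Measure.map (X i) ℙ = Measure.map (X 0) ℙ)
    (hindep : ProbabilityTheory.iIndepFun X ℙ)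
    (F : Fin d → ℝ → ℝ)
    (hF : ∀ m t, F m t = (ℙ {ω | X 0 ω m ≤ t}).toReal)
    (hFc : ∀ m, Continuous (F m))
    (δ : ℝ) (hδ : 0 < δ) :
    ∃ K₁ > 0, ∀ n : ℕ, 2 * (δ⁻¹ ⊔ 1) ≤ (n : ℝ) * Real.log n → ∀ j : ℕ,
      (2 : ℝ) ^ j ≤ (1 / 3) * Real.sqrt (2 * n / (δ * Real.log n)) →
      ∀ (m : Fin d) (k : Fin d → ℤ) (ε : Sd d),
        (ℙ {ω : Ω | (L + 3) * n * (2 : ℝ) ^ (-(j : ℝ)) < Ncount1 ψ X F n j k m ω}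
            ≤ ENNReal.ofReal (K₁ * (n : ℝ) ^ (-δ))) ∧
        ℙ {ω : Ω | d * (L + 3) * n * (2 : ℝ) ^ (-(j : ℝ)) < NcountD φ ψ X F n j k ε.1 ω}
          ≤ ENNReal.ofReal (K₁ * (n : ℝ) ^ (-δ)) := by
  have hd₁ : (1 : ℝ) ≤ d := mod_cast (by omega : 1 ≤ d)
  refine ⟨3 * d, by positivity, fun n hn j hj m k ε => ?_⟩
  have hn₁ : 1 < n := by
    by_contra! h
    have : (n : ℝ) * log n ≤ 0 :=
      mul_nonpos_of_nonneg_of_nonpos n.cast_nonneg (log_nonpos n.cast_nonneg (mod_cast h))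
    linarith [le_max_right δ⁻¹ 1]
  have hwindow :=
    measureReal_windowCount_gt_le hmeas hid hindep hF hFc (zero_le_one.trans hL) hn₁ hδ hj k
  have hrpow : (0 : ℝ) ≤ n ^ (-δ) := by positivity
  constructor
  · rw [← ofReal_measureReal]
    refine ENNReal.ofReal_le_ofReal <|
      (measureReal_Ncount1_gt_le_windowCount X F n j k hwav.2.2.2.1 m _).trans
        ((hwindow m).trans ?_)
    nlinarith
  · rw [← ofReal_measureReal, show d * (L + 3) * n * (2 : ℝ) ^ (-(j : ℝ))
      = d * ((L + 3) * n * (2 : ℝ) ^ (-(j : ℝ))) by ring]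
    refine ENNReal.ofReal_le_ofReal <|
      (measureReal_NcountD_gt_le_sum_windowCount X F n j k hwav.2.2.1 hwav.2.2.2.1 ε.1 _).trans
        ((Finset.sum_le_sum fun p _ => hwindow p).trans ?_)
    simp only [Finset.sum_const, Finset.card_univ, Fintype.card_fin, nsmul_eq_mul]
    nlinarith
end
end

section
/- Let 0 < r < 2 and let (a_i)_{i ∈ I} be a countable family of reals with Σ_{i ∈ I} a_i² < ∞. Then sup_{0 < λ ≤ 1} λ^{r−2} Σ_{i ∈ I} a_i² 1{|a_i| ≤ λ} < ∞ if and only if sup_{0 < λ ≤ 1} λ^r Σ_{i ∈ I} 1{|a_i| > λ} < ∞. -/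
/-!
Dyadic decomposition. Write `S μ = ∑_{|aᵢ| ≤ μ} aᵢ²` and `N μ = #{i | μ < |aᵢ|}`. On a shell
`x ≤ |aᵢ| ≤ 2x` one has `x² · #shell ≤ S (2x)` and `∑_shell aᵢ² ≤ (2x)² · N x`. Cutting
`{λ < |aᵢ| ≤ 1}` into the shells `[2ᵏλ, 2ᵏ⁺¹λ]` and `{|aᵢ| ≤ λ}` into the shells
`(2⁻ᵏ⁻¹λ, 2⁻ᵏλ]`, the bound `S μ ≤ C μ^(2-r)` gives `N λ ≤ N 1 + 2^(2-r) C λ^(-r) ∑ₖ 2^(-rk)`,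
and `N μ ≤ C μ^(-r)` gives `S λ ≤ 2^r C λ^(2-r) ∑ₖ 2^(-(2-r)k)`; both series converge as
`0 < r < 2`, and `N 1 ≤ ∑ aᵢ² < ∞`.
-/

open Set

open scoped ENNReal

noncomputable section

attribute [local instance] Classical.propDecidable

lemma tsum_ite_le_tsum_tsum_ite {ι J : Type*} {P : ι → Prop} {Q : J → ι → Prop}
    [DecidablePred P] [∀ j, DecidablePred (Q j)] (f : ι → ℝ≥0∞)
    (hcover : ∀ i, P i → f i ≠ 0 → ∃ j, Q j i) :
    ∑' i, (if P i then f i else 0) ≤ ∑' j, ∑' i, if Q j i then f i else 0 := by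
  rw [ENNReal.tsum_comm]
  refine ENNReal.tsum_le_tsum fun i => ?_
  split_ifs with hP
  · by_cases hf : f i = 0
    · simp [hf]
    obtain ⟨j, hj⟩ := hcover i hP hf
    exact (if_pos hj).symm.le.trans (ENNReal.le_tsum (f := fun j => if Q j i then f i else 0) j)
  · exact zero_le

lemma ofReal_rpow_mul_ofReal_rpow_neg {μ : ℝ} (hμ : 0 < μ) (s : ℝ) :
    ENNReal.ofReal (μ ^ s) * ENNReal.ofReal (μ ^ (-s)) = 1 := by
  rw [← ENNReal.ofReal_mul (by positivity), ← Real.rpow_add hμ, add_neg_cancel, Real.rpow_zero,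
    ENNReal.ofReal_one]

lemma le_ofReal_rpow_neg_mul {μ s : ℝ} (hμ : 0 < μ) {X C : ℝ≥0∞}
    (h : ENNReal.ofReal (μ ^ s) * X ≤ C) : X ≤ ENNReal.ofReal (μ ^ (-s)) * C :=
  calc X = ENNReal.ofReal (μ ^ (-s)) * (ENNReal.ofReal (μ ^ s) * X) := by
        rw [← mul_assoc, mul_comm (ENNReal.ofReal _), ofReal_rpow_mul_ofReal_rpow_neg hμ, one_mul]
    _ ≤ ENNReal.ofReal (μ ^ (-s)) * C := by gcongr

lemma pow_mul_rpow {c x : ℝ} (hc : 0 ≤ c) (hx : 0 ≤ x) (k : ℕ) (s : ℝ) :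
    (c ^ k * x) ^ s = (c ^ s) ^ k * x ^ s := by
  rw [Real.mul_rpow (pow_nonneg hc k) hx, Real.rpow_pow_comm hc]

lemma rpow_two_sub {x : ℝ} (hx : 0 < x) (r : ℝ) : x ^ (2 - r) = x ^ 2 * x ^ (-r) := by
  rw [sub_eq_add_neg, Real.rpow_add hx, Real.rpow_two]

section WeakBesov

variable {I : Type*} (a : I → ℝ)

def smallMass (μ : ℝ) : ℝ≥0∞ := ∑' i, if |a i| ≤ μ then ENNReal.ofReal (a i ^ 2) else 0

def largeCount (μ : ℝ) : ℝ≥0∞ := ∑' i, if μ < |a i| then 1 else 0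

lemma tsum_count_le_smallMass {x : ℝ} (hx : 0 < x) (ν : ℝ) :
    ∑' i, (if x ≤ |a i| ∧ |a i| ≤ ν then (1 : ℝ≥0∞) else 0)
      ≤ ENNReal.ofReal ((x ^ 2)⁻¹) * smallMass a ν := by
  rw [smallMass, ← ENNReal.tsum_mul_left]
  refine ENNReal.tsum_le_tsum fun i => ?_
  split_ifs with h h'
  · rw [← ENNReal.ofReal_mul (by positivity), ENNReal.one_le_ofReal,
      one_le_inv_mul₀ (by positivity), ← sq_abs (a i)]
    exact pow_le_pow_left₀ hx.le h.1 2
  · exact absurd h.2 h'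
  all_goals exact zero_le

lemma tsum_mass_le_largeCount (x ν : ℝ) :
    ∑' i, (if x < |a i| ∧ |a i| ≤ ν then ENNReal.ofReal (a i ^ 2) else 0)
      ≤ ENNReal.ofReal (ν ^ 2) * largeCount a x := by
  rw [largeCount, ← ENNReal.tsum_mul_left]
  refine ENNReal.tsum_le_tsum fun i => ?_
  split_ifs with h h'
  · rw [mul_one, ← sq_abs]
    exact ENNReal.ofReal_le_ofReal (pow_le_pow_left₀ (abs_nonneg _) h.2 2)
  · exact absurd h.1 h'
  all_goals exact zero_le

lemma largeCount_le_add (lam ν : ℝ) :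
    largeCount a lam ≤ largeCount a ν + ∑' i, if lam < |a i| ∧ |a i| ≤ ν then 1 else 0 := by
  rw [largeCount, largeCount, ← ENNReal.tsum_add]
  refine ENNReal.tsum_le_tsum fun i => ?_
  split_ifs <;> simp_all

lemma largeCount_one_ne_top (hsum : Summable fun i => a i ^ 2) : largeCount a 1 ≠ ⊤ := by
  refine ne_top_of_le_ne_top hsum.tsum_ofReal_lt_top.ne (ENNReal.tsum_le_tsum fun i => ?_)
  split_ifs with h
  · rw [ENNReal.one_le_ofReal, ← sq_abs]
    exact one_le_pow₀ h.le
  · exact zero_le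

section Forward

variable {r : ℝ} {C : ℝ≥0∞}
  (hS : ∀ μ ∈ Ioc (0 : ℝ) 1, smallMass a μ ≤ ENNReal.ofReal (μ ^ (2 - r)) * C)
include hS

lemma count_shell_le (hr2 : r ≤ 2) {x : ℝ} (hx : 0 < x) :
    ∑' i, (if x ≤ |a i| ∧ |a i| ≤ min (2 * x) 1 then (1 : ℝ≥0∞) else 0)
      ≤ ENNReal.ofReal (2 ^ (2 - r) * x ^ (-r)) * C :=
  calc _ ≤ ENNReal.ofReal ((x ^ 2)⁻¹) * smallMass a (min (2 * x) 1) :=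
        tsum_count_le_smallMass a hx _
    _ ≤ ENNReal.ofReal ((x ^ 2)⁻¹) * (ENNReal.ofReal ((2 * x) ^ (2 - r)) * C) := by
        gcongr
        refine (hS _ ⟨lt_min (by positivity) one_pos, min_le_right _ _⟩).trans ?_
        gcongr
        exact min_le_left _ _
    _ = ENNReal.ofReal (2 ^ (2 - r) * x ^ (-r)) * C := by
        rw [← mul_assoc, ← ENNReal.ofReal_mul (by positivity),
          Real.mul_rpow zero_le_two hx.le, rpow_two_sub hx]
        congr 2
        field_simp

lemma largeCount_le (hr2 : r ≤ 2) {lam : ℝ} (hlam : 0 < lam) :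
    largeCount a lam ≤ largeCount a 1 + ENNReal.ofReal (lam ^ (-r)) *
      (ENNReal.ofReal (2 ^ (2 - r)) * C * ∑' k : ℕ, ENNReal.ofReal (2 ^ (-r)) ^ k) := by
  have hcover : ∑' i, (if lam < |a i| ∧ |a i| ≤ 1 then (1 : ℝ≥0∞) else 0)
      ≤ ∑' k : ℕ, ∑' i,
        if 2 ^ k * lam ≤ |a i| ∧ |a i| ≤ min (2 * (2 ^ k * lam)) 1 then 1 else 0 := by
    refine tsum_ite_le_tsum_tsum_ite _ fun i hi _ => ?_
    obtain ⟨k, hk, hk'⟩ := exists_nat_pow_near ((one_le_div hlam).2 hi.1.le) one_lt_two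
    refine ⟨k, (le_div_iff₀ hlam).1 hk, le_min ?_ hi.2⟩
    rw [← mul_assoc, ← pow_succ']
    exact ((div_lt_iff₀ hlam).1 hk').le
  refine (largeCount_le_add a lam 1).trans (add_le_add le_rfl (hcover.trans ?_))
  rw [← ENNReal.tsum_mul_left, ← ENNReal.tsum_mul_left]
  refine ENNReal.tsum_le_tsum fun k => (count_shell_le a hS hr2 (by positivity)).trans_eq ?_
  rw [pow_mul_rpow zero_le_two hlam.le, ENNReal.ofReal_mul (by positivity),
    ENNReal.ofReal_mul (by positivity), ENNReal.ofReal_pow (by positivity)]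
  ring

lemma ofReal_rpow_mul_largeCount_le (hr0 : 0 ≤ r) (hr2 : r ≤ 2) {lam : ℝ}
    (hlam : lam ∈ Ioc (0 : ℝ) 1) :
    ENNReal.ofReal (lam ^ r) * largeCount a lam ≤ largeCount a 1 +
      ENNReal.ofReal (2 ^ (2 - r)) * C * ∑' k : ℕ, ENNReal.ofReal (2 ^ (-r)) ^ k := by
  have hle_one : ENNReal.ofReal (lam ^ r) ≤ 1 :=
    ENNReal.ofReal_le_one.2 (Real.rpow_le_one hlam.1.le hlam.2 hr0)
  grw [largeCount_le a hS hr2 hlam.1, mul_add, ← mul_assoc,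
    ofReal_rpow_mul_ofReal_rpow_neg hlam.1, one_mul, hle_one, one_mul]

end Forward

section Backward

variable {r : ℝ} {C : ℝ≥0∞}
  (hN : ∀ μ ∈ Ioc (0 : ℝ) 1, largeCount a μ ≤ ENNReal.ofReal (μ ^ (-r)) * C)
include hN

lemma mass_shell_le {y : ℝ} (hy : y ∈ Ioc (0 : ℝ) 1) :
    ∑' i, (if 2⁻¹ * y < |a i| ∧ |a i| ≤ y then ENNReal.ofReal (a i ^ 2) else 0)
      ≤ ENNReal.ofReal (2 ^ r * y ^ (2 - r)) * C :=
  calc _ ≤ ENNReal.ofReal (y ^ 2) * largeCount a (2⁻¹ * y) := tsum_mass_le_largeCount a _ _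
    _ ≤ ENNReal.ofReal (y ^ 2) * (ENNReal.ofReal ((2⁻¹ * y) ^ (-r)) * C) := by
        gcongr
        exact hN _ ⟨by linarith [hy.1], by linarith [hy.2]⟩
    _ = ENNReal.ofReal (2 ^ r * y ^ (2 - r)) * C := by
        rw [← mul_assoc, ← ENNReal.ofReal_mul (by positivity),
          Real.mul_rpow (by norm_num) hy.1.le, Real.inv_rpow zero_le_two, Real.rpow_neg zero_le_two,
          inv_inv, rpow_two_sub hy.1]
        ring_nf

lemma smallMass_le {lam : ℝ} (hlam : lam ∈ Ioc (0 : ℝ) 1) :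
    smallMass a lam ≤ ENNReal.ofReal (lam ^ (2 - r)) *
      (ENNReal.ofReal (2 ^ r) * C * ∑' k : ℕ, ENNReal.ofReal (2⁻¹ ^ (2 - r)) ^ k) := by
  have hcover : smallMass a lam ≤ ∑' k : ℕ, ∑' i,
      if 2⁻¹ * (2⁻¹ ^ k * lam) < |a i| ∧ |a i| ≤ 2⁻¹ ^ k * lam
        then ENNReal.ofReal (a i ^ 2) else 0 := by
    refine tsum_ite_le_tsum_tsum_ite _ fun i hi hne => ?_
    have ha : 0 < |a i| := abs_pos.2 fun h => hne (by simp [h])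
    obtain ⟨k, hk, hk'⟩ := exists_nat_pow_near_of_lt_one (div_pos ha hlam.1)
      ((div_le_one hlam.1).2 hi) (by norm_num : (0 : ℝ) < 2⁻¹) (by norm_num)
    refine ⟨k, ?_, (div_le_iff₀ hlam.1).1 hk'⟩
    rw [← mul_assoc, ← pow_succ']
    exact (lt_div_iff₀ hlam.1).1 hk
  refine hcover.trans ?_
  rw [← ENNReal.tsum_mul_left, ← ENNReal.tsum_mul_left]
  refine ENNReal.tsum_le_tsum fun k =>
    (mass_shell_le a hN ⟨mul_pos (by positivity) hlam.1, ?_⟩).trans_eq ?_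
  · exact mul_le_one₀ (pow_le_one₀ (by norm_num) (by norm_num)) hlam.1.le hlam.2
  rw [pow_mul_rpow (by norm_num) hlam.1.le, ENNReal.ofReal_mul (by positivity),
    ENNReal.ofReal_mul (by positivity), ENNReal.ofReal_pow (by positivity)]
  ring

lemma ofReal_rpow_mul_smallMass_le {lam : ℝ} (hlam : lam ∈ Ioc (0 : ℝ) 1) :
    ENNReal.ofReal (lam ^ (r - 2)) * smallMass a lam
      ≤ ENNReal.ofReal (2 ^ r) * C * ∑' k : ℕ, ENNReal.ofReal (2⁻¹ ^ (2 - r)) ^ k := by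
  have hone := ofReal_rpow_mul_ofReal_rpow_neg hlam.1 (r - 2)
  rw [neg_sub] at hone
  grw [smallMass_le a hN hlam, ← mul_assoc, hone, one_mul]

end Backward

theorem iSup_largeCount_lt_top {r : ℝ} (hr0 : 0 < r) (hr2 : r ≤ 2)
    (hsum : Summable fun i => a i ^ 2)
    (h : (⨆ lam ∈ Ioc (0 : ℝ) 1, ENNReal.ofReal (lam ^ (r - 2)) * smallMass a lam) < ⊤) :
    (⨆ lam ∈ Ioc (0 : ℝ) 1, ENNReal.ofReal (lam ^ r) * largeCount a lam) < ⊤ := by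
  set C := ⨆ lam ∈ Ioc (0 : ℝ) 1, ENNReal.ofReal (lam ^ (r - 2)) * smallMass a lam
  have hS : ∀ μ ∈ Ioc (0 : ℝ) 1, smallMass a μ ≤ ENNReal.ofReal (μ ^ (2 - r)) * C :=
    fun μ hμ => neg_sub r 2 ▸ le_ofReal_rpow_neg_mul hμ.1
      (le_iSup₂ (f := fun lam (_ : lam ∈ Ioc (0 : ℝ) 1) =>
        ENNReal.ofReal (lam ^ (r - 2)) * smallMass a lam) μ hμ)
  have hq : ENNReal.ofReal (2 ^ (-r)) < 1 :=
    ENNReal.ofReal_lt_one.2 (Real.rpow_lt_one_of_one_lt_of_neg one_lt_two (neg_neg_iff_pos.2 hr0))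
  refine (iSup₂_le fun (lam : ℝ) (hlam : lam ∈ Ioc (0 : ℝ) 1) =>
    ofReal_rpow_mul_largeCount_le a hS hr0.le hr2 hlam).trans_lt ?_
  have hC : C ≠ ⊤ := h.ne
  have hgeom := (tsum_geometric_lt_top.2 hq).ne
  have hbig := largeCount_one_ne_top a hsum
  finiteness

theorem iSup_smallMass_lt_top {r : ℝ} (hr2 : r < 2)
    (h : (⨆ lam ∈ Ioc (0 : ℝ) 1, ENNReal.ofReal (lam ^ r) * largeCount a lam) < ⊤) :
    (⨆ lam ∈ Ioc (0 : ℝ) 1, ENNReal.ofReal (lam ^ (r - 2)) * smallMass a lam) < ⊤ := by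
  set C := ⨆ lam ∈ Ioc (0 : ℝ) 1, ENNReal.ofReal (lam ^ r) * largeCount a lam
  have hN : ∀ μ ∈ Ioc (0 : ℝ) 1, largeCount a μ ≤ ENNReal.ofReal (μ ^ (-r)) * C :=
    fun μ hμ => le_ofReal_rpow_neg_mul hμ.1
      (le_iSup₂ (f := fun lam (_ : lam ∈ Ioc (0 : ℝ) 1) =>
        ENNReal.ofReal (lam ^ r) * largeCount a lam) μ hμ)
  have hq : ENNReal.ofReal (2⁻¹ ^ (2 - r)) < 1 :=
    ENNReal.ofReal_lt_one.2 (Real.rpow_lt_one (by norm_num) (by norm_num) (sub_pos.2 hr2))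
  refine (iSup₂_le fun (lam : ℝ) (hlam : lam ∈ Ioc (0 : ℝ) 1) =>
    ofReal_rpow_mul_smallMass_le a hN hlam).trans_lt ?_
  have hC : C ≠ ⊤ := h.ne
  have hgeom := (tsum_geometric_lt_top.2 hq).ne
  finiteness

end WeakBesov

theorem weakL_conditions_equiv_general
    (r : ℝ) (hr0 : 0 < r) (hr2 : r < 2)
    (I : Type) (a : I → ℝ)
    (hsum : Summable fun i => (a i) ^ 2) :
    ((⨆ lam ∈ Set.Ioc (0 : ℝ) 1, ENNReal.ofReal (lam ^ (r - 2)) *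
        ∑' i : I, (if |a i| ≤ lam then ENNReal.ofReal ((a i) ^ 2) else 0)) < ⊤)
    ↔ ((⨆ lam ∈ Set.Ioc (0 : ℝ) 1, ENNReal.ofReal (lam ^ r) *
        ∑' i : I, (if lam < |a i| then (1 : ℝ≥0∞) else 0)) < ⊤) :=
  ⟨iSup_largeCount_lt_top a hr0 hr2.le hsum, iSup_smallMass_lt_top a hr2⟩

/-- equivalence of the two defining conditions of the local weak Besov
space `W_L(r)` for an arbitrary square-summable countable family of coefficients. -/
theorem weakL_conditions_equiv
    (r : ℝ) (hr0 : 0 < r) (hr2 : r < 2)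
    (I : Type) [Countable I] (a : I → ℝ)
    (hsum : Summable fun i => (a i) ^ 2) :
    ((⨆ lam ∈ Set.Ioc (0 : ℝ) 1, ENNReal.ofReal (lam ^ (r - 2)) *
        ∑' i : I, (if |a i| ≤ lam then ENNReal.ofReal ((a i) ^ 2) else 0)) < ⊤)
    ↔ ((⨆ lam ∈ Set.Ioc (0 : ℝ) 1, ENNReal.ofReal (lam ^ r) *
        ∑' i : I, (if lam < |a i| then (1 : ℝ≥0∞) else 0)) < ⊤) :=
  weakL_conditions_equiv_general r hr0 hr2 I a hsum
end
end
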